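/- arXiv:2512.01978 — 12 statements merged into one kernel-verified Lean document; each statement's English description precedes it below -/
import Mathlib

section
/- If G is a connected graph and k ≥ Δ(G) (the maximum degree of G), then every k-fault-tolerant mutual-visibility set of G induces a clique; consequently the k-fault-tolerant mutual-visibility number of G equals the clique number ω(G). -/
open SimpleGraph

variable {V : Type*}

/-- `X` is a `k`-fault-tolerant mutual-visibility set of `G`: for any two distinct
non-adjacent vertices `u v ∈ X` there are `k+1` internally disjoint shortest
`u,v`-paths whose only vertices in `X` are `u` and `v`. -/
def IsFtmvSet (G : SimpleGraph V) (k : ℕ) (X : Set V) : Prop :=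
  ∀ u ∈ X, ∀ v ∈ X, u ≠ v → ¬ G.Adj u v →
    ∃ P : Fin (k + 1) → G.Path u v,
      (∀ i, (P i).1.length = G.dist u v) ∧
      (∀ i, ∀ w ∈ (P i).1.support, w ∈ X → w = u ∨ w = v) ∧
      (∀ i j, i ≠ j → ∀ w, w ∈ (P i).1.support → w ∈ (P j).1.support → w = u ∨ w = v)

/-- The `k`-fault-tolerant mutual-visibility number: maximum cardinality of a `k`-ftmv set. -/
noncomputable def ftmvNum (G : SimpleGraph V) (k : ℕ) : ℕ :=
  sSup {n | ∃ X : Set V, IsFtmvSet G k X ∧ X.ncard = n}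

/-- The clique number of `G`. -/
noncomputable def cliqueNum' (G : SimpleGraph V) : ℕ :=
  sSup {n | ∃ s : Finset V, G.IsNClique n s}

theorem stmt0 [Fintype V] (G : SimpleGraph V) [DecidableRel G.Adj]
    (hconn : G.Connected) (k : ℕ) (hk : G.maxDegree ≤ k) :
    (∀ X : Set V, IsFtmvSet G k X → G.IsClique X) ∧ ftmvNum G k = cliqueNum' G := by
  have hclique : ∀ X : Set V, IsFtmvSet G k X → G.IsClique X := by
    intro X hX u hu v hv hne
    by_contra hnadj
    obtain ⟨P, hlen, hin, hdisj⟩ := hX u hu v hv hne hnadj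
    -- each path has positive length
    have hpos : ∀ i : Fin (k+1), 0 < (P i).1.length := by
      intro i
      rcases Nat.eq_zero_or_pos (P i).1.length with h | h
      · exact absurd (SimpleGraph.Walk.eq_of_length_eq_zero h) hne
      · exact h
    set f : Fin (k+1) → V := fun i => (P i).1.getVert 1 with hf
    have hadj : ∀ i, G.Adj u (f i) := by
      intro i
      have := (P i).1.adj_getVert_succ (i := 0) (hpos i)
      simpa using this
    have hmem : ∀ i, f i ∈ (P i).1.support := by
      intro i
      rw [SimpleGraph.Walk.mem_support_iff_exists_getVert]
      exact ⟨1, rfl, hpos i⟩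
    have hinj : Function.Injective f := by
      intro i j hij
      by_contra hne'
      have h1 := hmem i
      have h2 : f i ∈ (P j).1.support := hij ▸ hmem j
      rcases hdisj i j hne' (f i) h1 h2 with h | h
      · exact G.irrefl (h ▸ hadj i)
      · exact hnadj (h ▸ hadj i)
    have hcard : k + 1 ≤ G.degree u := by
      rw [← SimpleGraph.card_neighborFinset_eq_degree]
      have := Finset.card_le_card_of_injOn (s := Finset.univ) f
        (fun i _ => (SimpleGraph.mem_neighborFinset G u (f i)).2 (hadj i))
        (hinj.injOn)
      simpa using this
    have := le_trans hcard (le_trans (G.degree_le_maxDegree u) hk)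
    omega
  refine ⟨hclique, ?_⟩
  unfold ftmvNum cliqueNum'
  congr 1
  ext n
  constructor
  · rintro ⟨X, hX, rfl⟩
    haveI := Fintype.ofFinite ↥X
    refine ⟨X.toFinset, ?_, ?_⟩
    · simpa [Set.coe_toFinset] using hclique X hX
    · exact (Set.ncard_eq_toFinset_card' X).symm
  · rintro ⟨s, hs⟩
    refine ⟨↑s, ?_, ?_⟩
    · intro u hu v hv hne hnadj
      exact absurd (hs.1 hu hv hne) hnadj
    · rw [Set.ncard_coe_finset, hs.2]
end

section
/- Let k ≥ 1 and let G be a nontrivial connected graph. If X is a k-ftmv set of G, then X is contained in a single block of G (a maximal connected subgraph without cut-vertices). Consequently fμᵏ(G) = max over blocks B of G of fμᵏ(B). -/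
open SimpleGraph

variable {V : Type*}

/-- A graph has no cut-vertex: removing any vertex leaves a connected graph
(or the graph had only that one vertex). -/
def NoCutVtx {W : Type*} (H : SimpleGraph W) : Prop :=
  ∀ v : W, (H.induce {w : W | w ≠ v}).Connected ∨ ∀ w : W, w = v

/-- `B` is the vertex set of a block of `G`: a maximal set inducing a connected
subgraph without cut-vertices. -/
def IsBlockSet (G : SimpleGraph V) (B : Set V) : Prop :=
  B.Nonempty ∧ (G.induce B).Connected ∧ NoCutVtx (G.induce B) ∧
  ∀ B' : Set V, B ⊆ B' → (G.induce B').Connected → NoCutVtx (G.induce B') → B' = B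

/-!
Call a vertex set nonseparable if it induces a connected subgraph without cut-vertex; the
blocks are the maximal ones. Let `S` be covered by paths inside `S` whose ends lie in a set
`X ⊆ S`, and suppose any two points of `X` stay joined inside `S` after deleting any one vertex
`c`. Then `S` is nonseparable: a vertex `w ≠ c` of such a path reaches an end of the path
along the half that avoids `c`.

For a `k`-ftmv set `X` with `k ≥ 1`, any two non-adjacent points of `X` are joined by two
internally disjoint paths, so the union of all paths between points of `X` is nonseparable and
lies in a block. Applied to a block and a single path between two of its vertices, the same
criterion shows that a block contains every path between its vertices. Hence `G[B] ↪ G` is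
isometric and lifts paths, so the ftmv sets of `G[B]` are exactly the ftmv sets of `G` inside
`B`, which gives the formula for `fμᵏ(G)`.
-/

namespace SimpleGraph

variable {G : SimpleGraph V}

def ReachableIn (G : SimpleGraph V) (S : Set V) (u v : V) : Prop :=
  ∃ p : G.Walk u v, ∀ w ∈ p.support, w ∈ S

namespace ReachableIn

variable {S T : Set V} {u v w : V}

lemma refl (hu : u ∈ S) : G.ReachableIn S u u := ⟨.nil, by simpa⟩

lemma symm : G.ReachableIn S u v → G.ReachableIn S v u
  | ⟨p, hp⟩ => ⟨p.reverse, by simpa using hp⟩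

lemma trans : G.ReachableIn S u v → G.ReachableIn S v w → G.ReachableIn S u w
  | ⟨p, hp⟩, ⟨q, hq⟩ => ⟨p.append q, by simp only [Walk.mem_support_append_iff]; grind⟩

lemma mono (hST : S ⊆ T) : G.ReachableIn S u v → G.ReachableIn T u v
  | ⟨p, hp⟩ => ⟨p, fun w hw => hST (hp w hw)⟩

end ReachableIn

@[simp]
lemma reachableIn_univ {u v : V} : G.ReachableIn Set.univ u v ↔ G.Reachable u v :=
  ⟨fun ⟨p, _⟩ => ⟨p⟩, fun ⟨p⟩ => ⟨p, fun _ _ => trivial⟩⟩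

lemma reachableIn_induce_iff {S : Set V} {T : Set S} {u v : S} :
    (G.induce S).ReachableIn T u v ↔ G.ReachableIn (Subtype.val '' T) u v := by
  constructor
  · rintro ⟨q, hq⟩
    refine ⟨q.map (Embedding.induce S).toHom, fun w hw => ?_⟩
    obtain ⟨w', hw', rfl⟩ := List.mem_map.1 (Walk.support_map _ q ▸ hw)
    exact ⟨w', hq w' hw', rfl⟩
  · rintro ⟨p, hp⟩
    refine ⟨p.induce S fun w hw => ?_, ?_⟩
    · obtain ⟨w', -, rfl⟩ := hp w hw; exact w'.2
    · intro w hw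
      rw [Walk.support_induce, List.mem_attachWith] at hw
      exact Subtype.val_injective.mem_set_image.1 (hp w hw)

lemma reachableIn_iff_reachable_induce {S : Set V} {u v : V} (hu : u ∈ S) (hv : v ∈ S) :
    G.ReachableIn S u v ↔ (G.induce S).Reachable ⟨u, hu⟩ ⟨v, hv⟩ := by
  rw [← (G.induce S).reachableIn_univ, reachableIn_induce_iff, Set.image_univ, Subtype.range_coe]

lemma connected_induce_iff_reachableIn {S : Set V} :
    (G.induce S).Connected ↔ S.Nonempty ∧ ∀ u ∈ S, ∀ v ∈ S, G.ReachableIn S u v := by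
  rw [connected_iff, and_comm, Set.nonempty_coe_sort]
  refine and_congr_right fun _ => ?_
  simp only [Preconnected, Subtype.forall]
  exact forall₂_congr fun u hu => forall₂_congr fun v hv =>
    (reachableIn_iff_reachable_induce hu hv).symm

lemma noCutVtx_induce_iff {S : Set V} :
    NoCutVtx (G.induce S) ↔
      ∀ c ∈ S, ∀ u ∈ S \ {c}, ∀ v ∈ S \ {c}, G.ReachableIn (S \ {c}) u v := by
  refine Subtype.forall.trans (forall₂_congr fun c hc => ?_)
  set T : Set S := {w | w ≠ ⟨c, hc⟩}
  have hT : Subtype.val '' T = S \ {c} := by ext; simp [T, Subtype.ext_iff, and_comm]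
  have hTe : (∀ w : S, w = ⟨c, hc⟩) ↔ ¬ T.Nonempty := by simp [T, Set.Nonempty]
  rw [connected_induce_iff_reachableIn, hTe, ← hT]
  simp_rw [Set.forall_mem_image, reachableIn_induce_iff]
  by_cases hne : T.Nonempty
  · simp [hne]
  · simp [Set.not_nonempty_iff_eq_empty.1 hne]

lemma Walk.reachableIn_of_mem_support {u v w : V} {p : G.Walk u v} (hw : w ∈ p.support) :
    G.ReachableIn {x | x ∈ p.support} w v := by
  classical
  exact ⟨p.dropUntil w hw, fun _ hx => p.support_dropUntil_subset_support hw hx⟩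

lemma Walk.IsPath.eq_of_mem_support_takeUntil_of_mem_support_dropUntil [DecidableEq V]
    {u v w x : V} {p : G.Walk u v} (hp : p.IsPath) (hw : w ∈ p.support)
    (h₁ : x ∈ (p.takeUntil w hw).support) (h₂ : x ∈ (p.dropUntil w hw).support) :
    x = w := by
  have hnodup := hp.support_nodup
  rw [← p.take_spec hw, Walk.support_append, List.nodup_append] at hnodup
  rw [← Walk.cons_tail_support, List.mem_cons] at h₂
  exact h₂.resolve_right fun h => hnodup.2.2 x h₁ x h rfl

lemma Walk.IsPath.exists_reachableIn_support_diff_singleton {u v w c : V} {p : G.Walk u v}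
    (hp : p.IsPath) (hw : w ∈ p.support) (hwc : w ≠ c) :
    ∃ z, (z = u ∨ z = v) ∧ z ≠ c ∧ G.ReachableIn ({x | x ∈ p.support} \ {c}) w z := by
  classical
  by_cases hc : c ∈ (p.takeUntil w hw).support
  · have hc' : c ∉ (p.dropUntil w hw).support := fun hc' =>
      hwc (hp.eq_of_mem_support_takeUntil_of_mem_support_dropUntil hw hc hc').symm
    refine ⟨v, .inr rfl, fun h => hc' (h ▸ Walk.end_mem_support _), p.dropUntil w hw,
      fun x hx => ⟨p.support_dropUntil_subset_support hw hx, fun h => hc' (h ▸ hx)⟩⟩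
  · refine ⟨u, .inl rfl, fun h => hc (h ▸ Walk.start_mem_support _),
      (p.takeUntil w hw).reverse, fun x hx => ?_⟩
    rw [Walk.support_reverse, List.mem_reverse] at hx
    exact ⟨p.support_takeUntil_subset_support hw hx, fun h => hc (h ▸ hx)⟩

lemma reachableIn_of_hub {S X : Set V} (hX : ∀ x ∈ X, ∀ y ∈ X, G.ReachableIn S x y)
    (hS : ∀ w ∈ S, ∃ x ∈ X, G.ReachableIn S w x) {u v : V} (hu : u ∈ S) (hv : v ∈ S) :
    G.ReachableIn S u v := by
  obtain ⟨x, hx, hux⟩ := hS u hu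
  obtain ⟨y, hy, hvy⟩ := hS v hv
  exact (hux.trans (hX x hx y hy)).trans hvy.symm

def IsNonseparableSet (G : SimpleGraph V) (S : Set V) : Prop :=
  (G.induce S).Connected ∧ NoCutVtx (G.induce S)

lemma isNonseparableSet_of_hub {X S : Set V} (hX : X.Nonempty) (hXS : X ⊆ S)
    (hcover : ∀ w ∈ S, ∃ a ∈ X, ∃ b ∈ X, ∃ p : G.Walk a b,
      p.IsPath ∧ w ∈ p.support ∧ {y | y ∈ p.support} ⊆ S)
    (hlink : ∀ x ∈ X, ∀ y ∈ X, G.ReachableIn S x y)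
    (hlink_diff : ∀ c ∈ S, ∀ x ∈ X \ {c}, ∀ y ∈ X \ {c}, G.ReachableIn (S \ {c}) x y) :
    G.IsNonseparableSet S := by
  refine ⟨connected_induce_iff_reachableIn.2 ⟨hX.mono hXS, fun u hu v hv => ?_⟩,
    noCutVtx_induce_iff.2 fun c hc u hu v hv => ?_⟩
  · refine reachableIn_of_hub hlink (fun w hw => ?_) hu hv
    obtain ⟨a, -, b, hb, p, -, hwp, hpS⟩ := hcover w hw
    exact ⟨b, hb, (Walk.reachableIn_of_mem_support hwp).mono hpS⟩
  · refine reachableIn_of_hub (hlink_diff c hc) (fun w ⟨hw, hwc⟩ => ?_) hu hv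
    obtain ⟨a, ha, b, hb, p, hp, hwp, hpS⟩ := hcover w hw
    obtain ⟨z, hz, hzc, hwz⟩ := hp.exists_reachableIn_support_diff_singleton hwp hwc
    refine ⟨z, ⟨?_, hzc⟩, hwz.mono (Set.sdiff_subset_sdiff_left hpS)⟩
    rcases hz with rfl | rfl
    exacts [ha, hb]

lemma IsNonseparableSet.reachableIn {S : Set V} (hS : G.IsNonseparableSet S) {u v : V}
    (hu : u ∈ S) (hv : v ∈ S) : G.ReachableIn S u v :=
  (connected_induce_iff_reachableIn.1 hS.1).2 u hu v hv

lemma IsNonseparableSet.reachableIn_diff_singleton {S : Set V} (hS : G.IsNonseparableSet S)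
    (c : V) {u v : V} (hu : u ∈ S \ {c}) (hv : v ∈ S \ {c}) : G.ReachableIn (S \ {c}) u v := by
  by_cases hc : c ∈ S
  · exact noCutVtx_induce_iff.1 hS.2 c hc u hu v hv
  · rw [Set.sdiff_singleton_eq_self hc] at hu hv ⊢
    exact hS.reachableIn hu hv

lemma isNonseparableSet_singleton (v : V) : G.IsNonseparableSet {v} := by
  refine isNonseparableSet_of_hub (Set.singleton_nonempty v) subset_rfl ?_ ?_ ?_
  · rintro w rfl
    exact ⟨w, rfl, w, rfl, .nil, by simp⟩
  · rintro x rfl y rfl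
    exact ReachableIn.refl rfl
  · rintro c - x ⟨rfl, hx⟩ y ⟨rfl, -⟩
    exact ReachableIn.refl ⟨rfl, hx⟩

lemma IsNonseparableSet.union_support {S : Set V} (hS : G.IsNonseparableSet S) {a b : V}
    {p : G.Walk a b} (hp : p.IsPath) (ha : a ∈ S) (hb : b ∈ S) :
    G.IsNonseparableSet (S ∪ {w | w ∈ p.support}) := by
  refine isNonseparableSet_of_hub ⟨a, ha⟩ Set.subset_union_left ?_
    (fun x hx y hy => (hS.reachableIn hx hy).mono Set.subset_union_left)
    (fun c _ x hx y hy => (hS.reachableIn_diff_singleton c hx hy).mono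
      (Set.sdiff_subset_sdiff_left Set.subset_union_left))
  rintro w (hw | hw)
  · exact ⟨w, hw, w, hw, .nil, by simp [hw]⟩
  · exact ⟨a, ha, b, hb, p, hp, hw, Set.subset_union_right⟩

end SimpleGraph

variable {G : SimpleGraph V}

lemma isBlockSet_iff_maximal {B : Set V} : IsBlockSet G B ↔ Maximal G.IsNonseparableSet B := by
  constructor
  · rintro ⟨-, hc, hn, hmax⟩
    exact ⟨⟨hc, hn⟩, fun B' ⟨hc', hn'⟩ hBB' => (hmax B' hBB' hc' hn').le⟩
  · rintro ⟨⟨hc, hn⟩, hmax⟩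
    exact ⟨Set.nonempty_coe_sort.1 hc.nonempty, hc, hn,
      fun B' hBB' hc' hn' => (hmax ⟨hc', hn'⟩ hBB').antisymm hBB'⟩

lemma SimpleGraph.IsNonseparableSet.exists_isBlockSet_superset [Finite V] {S : Set V}
    (hS : G.IsNonseparableSet S) : ∃ B, IsBlockSet G B ∧ S ⊆ B := by
  obtain ⟨B, hSB, hB⟩ := Finite.exists_le_maximal hS
  exact ⟨B, isBlockSet_iff_maximal.2 hB, hSB⟩

namespace IsBlockSet

variable {B : Set V}

lemma support_subset_of_isPath (hB : IsBlockSet G B) {u v : V} {p : G.Walk u v}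
    (hp : p.IsPath) (hu : u ∈ B) (hv : v ∈ B) : {w | w ∈ p.support} ⊆ B := by
  have hmax := isBlockSet_iff_maximal.1 hB
  rw [hmax.eq_of_subset (hmax.prop.union_support hp hu hv) Set.subset_union_left]
  exact Set.subset_union_right

lemma surjective_mapEmbedding (hB : IsBlockSet G B) (u v : B) :
    Function.Surjective
      (Path.mapEmbedding (Embedding.induce B) : (G.induce B).Path u v → G.Path u v) := by
  intro p
  have hmap := Walk.map_induce p.1 fun w hw => hB.support_subset_of_isPath p.2 u.2 v.2 hw
  exact ⟨⟨_, .of_map (hmap ▸ p.2)⟩, Subtype.ext hmap⟩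

lemma dist_induce (hB : IsBlockSet G B) (u v : B) : (G.induce B).dist u v = G.dist u v := by
  have hr := hB.2.1 u v
  refine le_antisymm ?_ ?_
  · obtain ⟨p, hp, hlen⟩ := (hr.map (Embedding.induce B).toHom).exists_path_of_dist
    obtain ⟨q, hq⟩ := hB.surjective_mapEmbedding u v ⟨p, hp⟩
    calc (G.induce B).dist u v ≤ q.1.length := dist_le _
      _ = p.length := (Walk.length_map _ _).symm.trans (congrArg (fun r => r.1.length) hq)
      _ = G.dist u v := hlen
  · obtain ⟨q, hq⟩ := hr.exists_walk_length_eq_dist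
    rw [← hq, ← Walk.length_map (Embedding.induce B).toHom]
    exact dist_le _

end IsBlockSet

lemma SimpleGraph.Embedding.isFtmvSet_image_iff {W : Type*} {H : SimpleGraph W} (f : H ↪g G)
    (hsurj : ∀ u v, Function.Surjective (Path.mapEmbedding f : H.Path u v → G.Path (f u) (f v)))
    (hdist : ∀ u v, G.dist (f u) (f v) = H.dist u v) {k : ℕ} {X : Set W} :
    IsFtmvSet G k (f '' X) ↔ IsFtmvSet H k X := by
  simp only [IsFtmvSet, Set.forall_mem_image]
  refine forall₂_congr fun u _ => forall₂_congr fun v _ => ?_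
  refine imp_congr f.injective.ne_iff (imp_congr f.map_adj_iff.not ?_)
  rw [(hsurj u v).comp_left.exists]
  simp [hdist, Walk.support_map, f.injective.eq_iff, f.injective.mem_set_image,
    List.forall_mem_map, List.mem_map_of_injective f.injective, -Set.mem_image, -List.mem_map]

lemma IsBlockSet.isFtmvSet_image_iff {B : Set V} (hB : IsBlockSet G B) {k : ℕ} {X : Set B} :
    IsFtmvSet G k (Embedding.induce (G := G) B '' X) ↔ IsFtmvSet (G.induce B) k X :=
  (Embedding.induce B).isFtmvSet_image_iff hB.surjective_mapEmbedding
    fun u v => (hB.dist_induce u v).symm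

namespace IsFtmvSet

variable {k : ℕ} {X : Set V}

lemma exists_internallyDisjoint_paths (hk : 1 ≤ k) (hX : IsFtmvSet G k X) {x y : V}
    (hx : x ∈ X) (hy : y ∈ X) :
    ∃ p q : G.Walk x y, p.IsPath ∧ q.IsPath ∧
      ∀ w ∈ p.support, w ∈ q.support → w = x ∨ w = y := by
  obtain rfl | hxy := eq_or_ne x y
  · exact ⟨.nil, .nil, .nil, .nil, by simp⟩
  by_cases hadj : G.Adj x y
  · exact ⟨hadj.toWalk, hadj.toWalk, hadj.isPath_toWalk, hadj.isPath_toWalk, by simp⟩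
  obtain ⟨P, -, -, hdisj⟩ := hX x hx y hy hxy hadj
  exact ⟨P 0, P 1, (P 0).2, (P 1).2, hdisj 0 1 (by simp; omega)⟩

lemma exists_isBlockSet_superset [Finite V] [Nonempty V] (hk : 1 ≤ k) (hX : IsFtmvSet G k X) :
    ∃ B, IsBlockSet G B ∧ X ⊆ B := by
  obtain rfl | hXne := X.eq_empty_or_nonempty
  · obtain ⟨B, hB, -⟩ :=
      (isNonseparableSet_singleton (G := G) (Classical.arbitrary V)).exists_isBlockSet_superset
    exact ⟨B, hB, Set.empty_subset B⟩
  set S := {w | ∃ a ∈ X, ∃ b ∈ X, ∃ p : G.Walk a b, p.IsPath ∧ w ∈ p.support}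
  have hpS {a b : V} (ha : a ∈ X) (hb : b ∈ X) {p : G.Walk a b} (hp : p.IsPath) :
      {w | w ∈ p.support} ⊆ S := fun w hw => ⟨a, ha, b, hb, p, hp, hw⟩
  have hXS : X ⊆ S := fun x hx => hpS hx hx .nil (by simp)
  have hS : G.IsNonseparableSet S := by
    refine isNonseparableSet_of_hub hXne hXS
      (fun w ⟨a, ha, b, hb, p, hp, hw⟩ => ⟨a, ha, b, hb, p, hp, hw, hpS ha hb hp⟩) ?_ ?_
    · intro x hx y hy
      obtain ⟨p, -, hp, -⟩ := hX.exists_internallyDisjoint_paths hk hx hy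
      exact ⟨p, hpS hx hy hp⟩
    · rintro c - x ⟨hx, hxc⟩ y ⟨hy, hyc⟩
      obtain ⟨p, q, hp, hq, hpq⟩ := hX.exists_internallyDisjoint_paths hk hx hy
      by_cases hcp : c ∈ p.support
      · have hcq : c ∉ q.support := fun hcq => (hpq c hcp hcq).elim (hxc ·.symm) (hyc ·.symm)
        exact ⟨q, fun w hw => ⟨hpS hx hy hq hw, fun h => hcq (h ▸ hw)⟩⟩
      · exact ⟨p, fun w hw => ⟨hpS hx hy hp hw, fun h => hcp (h ▸ hw)⟩⟩
  obtain ⟨B, hB, hSB⟩ := hS.exists_isBlockSet_superset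
  exact ⟨B, hB, hXS.trans hSB⟩

end IsFtmvSet

lemma isFtmvSet_empty (G : SimpleGraph V) (k : ℕ) : IsFtmvSet G k ∅ := by
  simp [IsFtmvSet]

section ftmvNum

variable [Finite V] {k : ℕ}

lemma bddAbove_ftmvNum_set (G : SimpleGraph V) (k : ℕ) :
    BddAbove {n | ∃ X : Set V, IsFtmvSet G k X ∧ X.ncard = n} :=
  ⟨Nat.card V, by rintro _ ⟨X, -, rfl⟩; exact Set.ncard_le_card X⟩

lemma IsFtmvSet.ncard_le_ftmvNum {X : Set V} (hX : IsFtmvSet G k X) : X.ncard ≤ ftmvNum G k :=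
  le_csSup (bddAbove_ftmvNum_set G k) ⟨X, hX, rfl⟩

lemma exists_isFtmvSet_ncard_eq_ftmvNum (G : SimpleGraph V) (k : ℕ) :
    ∃ X, IsFtmvSet G k X ∧ X.ncard = ftmvNum G k :=
  Nat.sSup_mem (s := {n | ∃ X : Set V, IsFtmvSet G k X ∧ X.ncard = n})
    ⟨0, ∅, isFtmvSet_empty G k, Set.ncard_empty V⟩ (bddAbove_ftmvNum_set G k)

namespace IsBlockSet

variable {B : Set V}

lemma ftmvNum_induce_le (hB : IsBlockSet G B) : ftmvNum (G.induce B) k ≤ ftmvNum G k := by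
  obtain ⟨X, hX, hcard⟩ := exists_isFtmvSet_ncard_eq_ftmvNum (G.induce B) k
  rw [← hcard, ← Set.ncard_image_of_injective X (Embedding.induce B).injective]
  exact (hB.isFtmvSet_image_iff.2 hX).ncard_le_ftmvNum

lemma ncard_le_ftmvNum_induce (hB : IsBlockSet G B) {X : Set V} (hX : IsFtmvSet G k X)
    (hXB : X ⊆ B) : X.ncard ≤ ftmvNum (G.induce B) k := by
  have hX' : Embedding.induce (G := G) B '' (Subtype.val ⁻¹' X : Set B) = X :=
    (Subtype.image_preimage_coe B X).trans (Set.inter_eq_right.2 hXB)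
  rw [← hX'] at hX ⊢
  rw [Set.ncard_image_of_injective _ (Embedding.induce B).injective]
  exact (hB.isFtmvSet_image_iff.1 hX).ncard_le_ftmvNum

end IsBlockSet

end ftmvNum

theorem stmt3_general [Fintype V] [Nontrivial V] (G : SimpleGraph V)
    (k : ℕ) (hk : 1 ≤ k) :
    (∀ X : Set V, IsFtmvSet G k X → ∃ B : Set V, IsBlockSet G B ∧ X ⊆ B) ∧
    ftmvNum G k = sSup {n | ∃ B : Set V, IsBlockSet G B ∧ n = ftmvNum (G.induce B) k} := by
  refine ⟨fun X hX => hX.exists_isBlockSet_superset hk, ?_⟩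
  obtain ⟨X, hX, hcard⟩ := exists_isFtmvSet_ncard_eq_ftmvNum G k
  obtain ⟨B, hB, hXB⟩ := hX.exists_isBlockSet_superset hk
  symm
  refine IsGreatest.csSup_eq ⟨⟨B, hB, ?_⟩, ?_⟩
  · exact le_antisymm (hcard ▸ hB.ncard_le_ftmvNum_induce hX hXB) hB.ftmvNum_induce_le
  · rintro _ ⟨B', hB', rfl⟩
    exact hB'.ftmvNum_induce_le

theorem stmt3 [Fintype V] [Nontrivial V] (G : SimpleGraph V) (hconn : G.Connected)
    (k : ℕ) (hk : 1 ≤ k) :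
    (∀ X : Set V, IsFtmvSet G k X → ∃ B : Set V, IsBlockSet G B ∧ X ⊆ B) ∧
    ftmvNum G k = sSup {n | ∃ B : Set V, IsBlockSet G B ∧ n = ftmvNum (G.induce B) k} :=
  stmt3_general G k hk
end

section
/- For every nontrivial tree T and every k ≥ 1, fμᵏ(T) = 2. -/
open SimpleGraph

variable {V : Type*}

theorem stmt4 [Fintype V] [Nontrivial V] (G : SimpleGraph V) (htree : G.IsTree)
    (k : ℕ) (hk : 1 ≤ k) : ftmvNum G k = 2 := by
  classical
  have hconn := htree.isConnected
  have hacyc := htree.IsAcyclic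
  -- any two distinct members of a ftmv set are adjacent
  have hadj : ∀ X : Set V, IsFtmvSet G k X → ∀ u ∈ X, ∀ v ∈ X, u ≠ v → G.Adj u v := by
    intro X hX u hu v hv huv
    by_contra hnadj
    obtain ⟨P, hP1, _, hP3⟩ := hX u hu v hv huv hnadj
    have hdistpos : 0 < G.dist u v := hconn.pos_dist_of_ne huv
    have hlen : 0 < (P 0).1.length := by rw [hP1 0]; exact hdistpos
    set p := (P 0).1 with hp
    set w := p.getVert 1 with hw
    have hadjuw : G.Adj u w := by
      have := p.adj_getVert_succ (i := 0) hlen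
      simpa using this
    have hwmem : w ∈ p.support :=
      SimpleGraph.Walk.mem_support_iff_exists_getVert.mpr ⟨1, rfl, hlen⟩
    have hwu : w ≠ u := fun h => G.irrefl (h ▸ hadjuw)
    have hwv : w ≠ v := fun h => hnadj (h ▸ hadjuw)
    have h01 : (0 : Fin (k+1)) ≠ 1 := by
      have : (1 : ℕ) < k + 1 := by omega
      simp [Fin.ext_iff, Nat.mod_eq_of_lt this]
    have hPeq : P 0 = P 1 := hacyc.path_unique (P 0) (P 1)
    have := hP3 0 1 h01 w hwmem (by rw [← hPeq]; exact hwmem)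
    tauto
  -- any ftmv set has at most 2 elements
  have hbound : ∀ n ∈ {n | ∃ X : Set V, IsFtmvSet G k X ∧ X.ncard = n}, n ≤ 2 := by
    rintro n ⟨X, hX, rfl⟩
    by_contra hlt
    push_neg at hlt
    obtain ⟨a, ha, b, hb, c, hc, hab, hac, hbc⟩ :=
      (Set.two_lt_ncard (X.toFinite)).mp hlt
    have hAB := hadj X hX a ha b hb hab
    have hBC := hadj X hX b hb c hc hbc
    have hAC := hadj X hX a ha c hc hac
    -- two distinct paths from a to c contradict acyclicity
    have hp1 : (SimpleGraph.Walk.cons hAB (SimpleGraph.Walk.cons hBC SimpleGraph.Walk.nil)).IsPath := by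
      simp [SimpleGraph.Walk.isPath_def, hab, hac, hbc]
    have hp2 : (SimpleGraph.Walk.cons hAC SimpleGraph.Walk.nil).IsPath := by
      simp [SimpleGraph.Walk.isPath_def, hac]
    have := hacyc.path_unique ⟨_, hp1⟩ ⟨_, hp2⟩
    have hlen := congrArg (fun P : G.Path a c => P.1.length) this
    simp at hlen
  -- there is an edge, giving a ftmv set of size 2
  obtain ⟨u, v, huv⟩ := exists_pair_ne V
  obtain ⟨pw⟩ := hconn.preconnected u v
  have hedge : ∃ a b, G.Adj a b := by
    cases pw with
    | nil => exact absurd rfl huv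
    | cons h _ => exact ⟨_, _, h⟩
  obtain ⟨a, b, hab⟩ := hedge
  have hne : a ≠ b := hab.ne
  have h2mem : 2 ∈ {n | ∃ X : Set V, IsFtmvSet G k X ∧ X.ncard = n} := by
    refine ⟨{a, b}, ?_, by rw [Set.ncard_pair hne]⟩
    intro x hx y hy hxy hnadj
    exfalso
    apply hnadj
    rcases hx with rfl | rfl <;> rcases hy with rfl | rfl <;>
      first
        | exact absurd rfl hxy
        | exact hab
        | exact hab.symm
  have hbdd : BddAbove {n | ∃ X : Set V, IsFtmvSet G k X ∧ X.ncard = n} := ⟨2, hbound⟩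
  exact le_antisymm (csSup_le ⟨2, h2mem⟩ hbound) (le_csSup hbdd h2mem)
end

section
/- If H is a convex subgraph of a graph G and X is a k-ftmv set of G, then X ∩ V(H) is a k-ftmv set of H; in particular fμᵏ(H) ≤ fμᵏ(G). -/
open SimpleGraph

variable {V : Type*}

/-- A set `S` is convex in `G` if every shortest path between vertices of `S`
lies entirely in `S`. -/
def IsConvexSet (G : SimpleGraph V) (S : Set V) : Prop :=
  ∀ u ∈ S, ∀ v ∈ S, ∀ p : G.Walk u v, p.IsPath → p.length = G.dist u v →
    ∀ w ∈ p.support, w ∈ S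

/-! Convexity makes every shortest path of `G` between vertices of `S` a path of `G[S]`, so
`G[S]` is isometric in `G` and shortest paths transfer in both directions: the `k + 1` paths
witnessing two vertices of `X ∩ S` in `G` are witnesses in `G[S]`, and conversely a `k`-ftmv
set of `G[S]` is, via the inclusion, a `k`-ftmv set of `G` of the same size. -/

namespace SimpleGraph

variable {G : SimpleGraph V} {S : Set V}

theorem Walk.length_induce {u v : V} (p : G.Walk u v) (hp : ∀ x ∈ p.support, x ∈ S) :
    (p.induce S hp).length = p.length :=
  (Walk.length_map _ _).symm.trans (congrArg Walk.length (p.map_induce hp))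

theorem Walk.IsPath.induce {u v : V} {p : G.Walk u v} (hp : p.IsPath)
    (hpS : ∀ x ∈ p.support, x ∈ S) : (p.induce S hpS).IsPath :=
  Walk.IsPath.of_map (f := (Embedding.induce S).toHom) (by rwa [Walk.map_induce])

theorem Walk.support_map_induce {u v : S} (q : (G.induce S).Walk u v) :
    (q.map (Embedding.induce S).toHom).support = q.support.map Subtype.val :=
  Walk.support_map _ _

theorem dist_le_dist_induce {u v : S} (h : (G.induce S).Reachable u v) :
    G.dist u v ≤ (G.induce S).dist u v := by
  obtain ⟨q, hq⟩ := h.exists_walk_length_eq_dist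
  have := dist_le (q.map (Embedding.induce S).toHom)
  rwa [Walk.length_map, hq] at this

theorem IsConvexSet.dist_induce (hS : IsConvexSet G S) (u v : S) :
    (G.induce S).dist u v = G.dist u v := by
  by_cases h : G.Reachable u v
  · obtain ⟨p, hp, hlen⟩ := h.exists_path_of_dist
    let q := p.induce S (hS u u.2 v v.2 p hp hlen)
    refine le_antisymm ?_ (dist_le_dist_induce ⟨q⟩)
    simpa only [q, Walk.length_induce, hlen] using dist_le q
  · have h' : ¬ (G.induce S).Reachable u v := fun h' => h (h'.map (Embedding.induce S).toHom)
    rw [dist_eq_zero_of_not_reachable h, dist_eq_zero_of_not_reachable h']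

end SimpleGraph

variable {G : SimpleGraph V} {S : Set V} {k : ℕ}

theorem IsFtmvSet.preimage_val (hS : IsConvexSet G S) {X : Set V} (hX : IsFtmvSet G k X) :
    IsFtmvSet (G.induce S) k (Subtype.val ⁻¹' X) := by
  intro u hu v hv huv hadj
  obtain ⟨P, hlen, hPX, hdisj⟩ := hX u hu v hv (Subtype.val_injective.ne huv) hadj
  have hPS i : ∀ w ∈ (P i).1.support, w ∈ S := hS u u.2 v v.2 _ (P i).2 (hlen i)
  refine ⟨fun i => ⟨(P i).1.induce S (hPS i), (P i).2.induce (hPS i)⟩, fun i => ?_,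
    fun i w hw hwX => ?_, fun i j hij w hwi hwj => ?_⟩
  · simp only [Walk.length_induce, hlen, hS.dist_induce]
  · simp only [Walk.support_induce, List.mem_attachWith] at hw
    simpa only [Subtype.ext_iff] using hPX i w hw hwX
  · simp only [Walk.support_induce, List.mem_attachWith] at hwi hwj
    simpa only [Subtype.ext_iff] using hdisj i j hij w hwi hwj

theorem IsFtmvSet.image_val (hdist : ∀ u v : S, (G.induce S).dist u v = G.dist u v)
    {Y : Set S} (hY : IsFtmvSet (G.induce S) k Y) : IsFtmvSet G k (Subtype.val '' Y) := by
  rintro _ ⟨u, hu, rfl⟩ _ ⟨v, hv, rfl⟩ huv hadj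
  obtain ⟨Q, hlen, hQY, hdisj⟩ := hY u hu v hv (ne_of_apply_ne _ huv) hadj
  refine ⟨fun i => ⟨(Q i).1.map (Embedding.induce S).toHom, (Q i).2.map Subtype.val_injective⟩,
    fun i => ?_, fun i w hw hwY => ?_, fun i j hij w hwi hwj => ?_⟩
  · exact (Walk.length_map _ _).trans ((hlen i).trans (hdist u v))
  · have hw' : w ∈ (Q i).1.support.map Subtype.val := Walk.support_map_induce _ ▸ hw
    obtain ⟨c, hc, rfl⟩ := List.mem_map.mp hw'
    exact (hQY i c hc (Subtype.val_injective.mem_set_image.mp hwY)).imp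
      (congrArg Subtype.val) (congrArg Subtype.val)
  · have hwi' : w ∈ (Q i).1.support.map Subtype.val := Walk.support_map_induce _ ▸ hwi
    have hwj' : w ∈ (Q j).1.support.map Subtype.val := Walk.support_map_induce _ ▸ hwj
    obtain ⟨c, hc, rfl⟩ := List.mem_map.mp hwi'
    rw [List.mem_map_of_injective Subtype.val_injective] at hwj'
    exact (hdisj i j hij c hc hwj').imp (congrArg Subtype.val) (congrArg Subtype.val)

theorem bddAbove_ftmvSet_ncard [Finite V] (G : SimpleGraph V) (k : ℕ) :
    BddAbove {n | ∃ X : Set V, IsFtmvSet G k X ∧ X.ncard = n} :=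
  ⟨Nat.card V, by rintro _ ⟨X, -, rfl⟩; exact Set.ncard_le_card X⟩

theorem ftmvNum_induce_le [Finite V] (hdist : ∀ u v : S, (G.induce S).dist u v = G.dist u v) :
    ftmvNum (G.induce S) k ≤ ftmvNum G k :=
  csSup_le_csSup' (bddAbove_ftmvSet_ncard G k) <| by
    rintro _ ⟨Y, hY, rfl⟩
    exact ⟨_, hY.image_val hdist, Set.ncard_image_of_injective _ Subtype.val_injective⟩

theorem stmt5_general [Fintype V] (G : SimpleGraph V)
    (S : Set V) (hS : IsConvexSet G S) (k : ℕ) :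
    (∀ X : Set V, IsFtmvSet G k X → IsFtmvSet (G.induce S) k (Subtype.val ⁻¹' X)) ∧
    ftmvNum (G.induce S) k ≤ ftmvNum G k :=
  ⟨fun _ hX => hX.preimage_val hS, ftmvNum_induce_le hS.dist_induce⟩

theorem stmt5 [Fintype V] (G : SimpleGraph V) (hconn : G.Connected)
    (S : Set V) (hS : IsConvexSet G S) (k : ℕ) :
    (∀ X : Set V, IsFtmvSet G k X → IsFtmvSet (G.induce S) k (Subtype.val ⁻¹' X)) ∧
    ftmvNum (G.induce S) k ≤ ftmvNum G k :=
  stmt5_general G S hS k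
end

section
/- If G is a connected graph and k ≥ ℓ ≥ 0, then fμᵏ(G) = n(G) − ℓ if and only if ω(G) = n(G) − ℓ. -/
open SimpleGraph

variable {V : Type*}

lemma ftmv_of_clique {G : SimpleGraph V} {k : ℕ} {X : Set V} (h : G.IsClique X) :
    IsFtmvSet G k X := fun _ hu _ hv hne hadj => absurd (h hu hv hne) hadj

lemma clique_of_ftmv [Fintype V] {G : SimpleGraph V} {k : ℕ} {X : Set V}
    (hX : IsFtmvSet G k X) (hc : Xᶜ.ncard ≤ k) : G.IsClique X := by
  intro u hu v hv hne
  by_contra hadj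
  obtain ⟨P, _, hin, hdisj⟩ := hX u hu v hv hne hadj
  have hsnd : ∀ i : Fin (k + 1), ∃ b, b ∈ (P i).1.support ∧ b ≠ u ∧ b ≠ v := by
    intro i
    obtain ⟨x, hxa, p', hp'⟩ := Walk.exists_eq_cons_of_ne hne (P i).1
    have hpath := (P i).2
    rw [hp', Walk.cons_isPath_iff] at hpath
    refine ⟨x, ?_, ?_, ?_⟩
    · rw [hp', Walk.support_cons]
      exact List.mem_cons_of_mem _ (Walk.start_mem_support p')
    · rintro rfl; exact hpath.2 (Walk.start_mem_support p')
    · rintro rfl; exact hadj hxa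
  choose b hbsup hbu hbv using hsnd
  have hbX : ∀ i, b i ∈ Xᶜ := fun i hbx =>
    ((hin i) (b i) (hbsup i) hbx).elim (hbu i) (hbv i)
  have hinj : Function.Injective (fun i => (⟨b i, hbX i⟩ : ↥Xᶜ)) := by
    intro i j hij
    simp only [Subtype.mk_eq_mk] at hij
    by_contra hne'
    rcases hdisj i j hne' (b i) (hbsup i) (hij ▸ hbsup j) with h | h
    exacts [hbu i h, hbv i h]
  have h1 : Nat.card (Fin (k + 1)) ≤ Nat.card ↥Xᶜ :=
    Nat.card_le_card_of_injective _ hinj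
  rw [Nat.card_eq_fintype_card, Fintype.card_fin, Nat.card_coe_set_eq] at h1
  omega

theorem stmt8 [Fintype V] (G : SimpleGraph V) (hconn : G.Connected)
    (k ℓ : ℕ) (hkl : ℓ ≤ k) :
    ftmvNum G k = Fintype.card V - ℓ ↔ cliqueNum' G = Fintype.card V - ℓ := by
  set n := Fintype.card V with hn
  set Sf : Set ℕ := {m | ∃ X : Set V, IsFtmvSet G k X ∧ X.ncard = m} with hSf
  set Sc : Set ℕ := {m | ∃ s : Finset V, G.IsNClique m s} with hSc
  have hSfne : Sf.Nonempty :=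
    ⟨0, ∅, fun u hu => absurd hu (Set.notMem_empty u), Set.ncard_empty V⟩
  have hScne : Sc.Nonempty := ⟨0, ∅, by simp [isNClique_empty]⟩
  have hSfbdd : BddAbove Sf := by
    refine ⟨n, fun m hm => ?_⟩
    obtain ⟨X, _, hX⟩ := hm
    calc m = X.ncard := hX.symm
      _ ≤ (Set.univ : Set V).ncard := Set.ncard_le_ncard (Set.subset_univ X) Set.finite_univ
      _ = n := by rw [Set.ncard_univ, Nat.card_eq_fintype_card]
  have hScbdd : BddAbove Sc := by
    refine ⟨n, fun m hm => ?_⟩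
    obtain ⟨s, hs⟩ := hm
    rw [← hs.2]
    exact Finset.card_le_univ s
  have hfc : cliqueNum' G ≤ ftmvNum G k := by
    rw [ftmvNum, cliqueNum']
    refine csSup_le hScne fun m hm => ?_
    obtain ⟨s, hs⟩ := hm
    exact le_csSup hSfbdd ⟨(s : Set V), ftmv_of_clique hs.1,
      by rw [Set.ncard_coe_finset]; exact hs.2⟩
  have hfmem : ftmvNum G k ∈ Sf := Nat.sSup_mem hSfne hSfbdd
  obtain ⟨X, hX, hXcard⟩ := hfmem
  have hsum : X.ncard + Xᶜ.ncard = n := by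
    rw [Set.ncard_add_ncard_compl X, Nat.card_eq_fintype_card]
  have hclique_mem : G.IsClique X → X.ncard ∈ Sc := by
    intro hcl
    refine ⟨X.toFinite.toFinset, ?_, ?_⟩
    · rw [Set.Finite.coe_toFinset]; exact hcl
    · rw [← Set.ncard_eq_toFinset_card]
  constructor
  · intro h
    have hcompl : Xᶜ.ncard ≤ k := by omega
    have hcl := clique_of_ftmv hX hcompl
    have hmem := hclique_mem hcl
    refine le_antisymm (h ▸ hfc) ?_
    have := le_csSup hScbdd hmem
    rw [cliqueNum', ← hSc]
    omega
  · intro h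
    refine le_antisymm ?_ (h ▸ hfc)
    by_contra hlt
    push_neg at hlt
    have hcompl : Xᶜ.ncard ≤ k := by omega
    have hcl := clique_of_ftmv hX hcompl
    have hmem := hclique_mem hcl
    have hle : X.ncard ≤ cliqueNum' G := by
      rw [cliqueNum', ← hSc]; exact le_csSup hScbdd hmem
    omega
end

section
/- For every connected graph G and every k ≥ 1, fμᵏ(G) = n(G) − 1 if and only if ω(G) = n(G) − 1. -/
open SimpleGraph

variable {V : Type*}

/-- A walk between distinct non-adjacent vertices has an internal vertex. -/
private lemma exists_internal {G : SimpleGraph V} {u v : V} (p : G.Walk u v)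
    (hne : u ≠ v) (hnadj : ¬ G.Adj u v) : ∃ w ∈ p.support, w ≠ u ∧ w ≠ v := by
  cases p with
  | nil => exact absurd rfl hne
  | cons h q =>
    refine ⟨_, by simp [Walk.start_mem_support], h.ne', fun hv => hnadj (hv ▸ h)⟩

private lemma ftmv_ncard_le [Fintype V] {G : SimpleGraph V} {k : ℕ} {X : Set V}
    (hX : IsFtmvSet G k X) {u v : V} (huv : u ≠ v) (hnadj : ¬ G.Adj u v) :
    X.ncard ≤ Fintype.card V - 1 := by
  have hne_univ : X ≠ Set.univ := by
    intro he; subst he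
    obtain ⟨P, _, hin, _⟩ := hX u trivial v trivial huv hnadj
    obtain ⟨w, hws, hwu, hwv⟩ := exists_internal (P 0).1 huv hnadj
    rcases hin 0 w hws trivial with h | h <;> [exact hwu h; exact hwv h]
  have hlt : X.ncard < (Set.univ : Set V).ncard :=
    Set.ncard_lt_ncard (HasSubset.Subset.ssubset_of_ne (Set.subset_univ X) hne_univ)
      Set.finite_univ
  rw [Set.ncard_univ, Nat.card_eq_fintype_card] at hlt
  omega

private lemma ftmv_clique [Fintype V] {G : SimpleGraph V} {k : ℕ} {X : Set V}
    (hk : 1 ≤ k) (hX : IsFtmvSet G k X) (hcard : X.ncard = Fintype.card V - 1)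
    (hn1 : 1 ≤ Fintype.card V) : G.IsClique X := by
  intro u hu v hv hne
  by_contra hnadj
  obtain ⟨P, hlen, hin, hdisj⟩ := hX u hu v hv hne hnadj
  have hk2 : 0 < k + 1 := by omega
  have hk2' : 1 < k + 1 := by omega
  set i0 : Fin (k + 1) := ⟨0, hk2⟩
  set i1 : Fin (k + 1) := ⟨1, hk2'⟩
  obtain ⟨w0, hw0s, hw0u, hw0v⟩ := exists_internal (P i0).1 hne hnadj
  obtain ⟨w1, hw1s, hw1u, hw1v⟩ := exists_internal (P i1).1 hne hnadj
  have hw0X : w0 ∉ X := fun h => by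
    rcases hin i0 w0 hw0s h with h' | h' <;> [exact hw0u h'; exact hw0v h']
  have hw1X : w1 ∉ X := fun h => by
    rcases hin i1 w1 hw1s h with h' | h' <;> [exact hw1u h'; exact hw1v h']
  have hne01 : i0 ≠ i1 := Fin.ne_of_val_ne (by norm_num)
  have hww : w0 ≠ w1 := by
    intro h; subst h
    rcases hdisj i0 i1 hne01 w0 hw0s hw1s with h' | h' <;> [exact hw0u h'; exact hw0v h']
  have hcompl : Xᶜ.ncard = 1 := by
    have h2 := Set.ncard_add_ncard_compl X
    rw [Nat.card_eq_fintype_card] at h2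
    omega
  obtain ⟨a, ha⟩ := Set.ncard_eq_one.mp hcompl
  have h0 : w0 ∈ Xᶜ := hw0X
  have h1 : w1 ∈ Xᶜ := hw1X
  rw [ha, Set.mem_singleton_iff] at h0 h1
  exact hww (h0.trans h1.symm)

theorem stmt10 [Fintype V] (G : SimpleGraph V) (hconn : G.Connected) (k : ℕ) (hk : 1 ≤ k) :
    ftmvNum G k = Fintype.card V - 1 ↔ cliqueNum' G = Fintype.card V - 1 := by
  classical
  have hn1 : 1 ≤ Fintype.card V := by
    have : Nonempty V := hconn.nonempty
    exact Fintype.card_pos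
  set Sf := {n | ∃ X : Set V, IsFtmvSet G k X ∧ X.ncard = n} with hSf
  set Sc := {n | ∃ s : Finset V, G.IsNClique n s} with hSc
  have hFne : Sf.Nonempty := ⟨0, ∅, fun u hu => absurd hu (Set.notMem_empty u), by simp⟩
  have hCne : Sc.Nonempty := ⟨0, ∅, isNClique_empty.mpr rfl⟩
  have hbddF : BddAbove Sf := by
    refine ⟨Fintype.card V, fun m hm => ?_⟩
    obtain ⟨X, _, hXm⟩ := hm
    subst hXm
    have := Set.ncard_le_ncard (Set.subset_univ X) Set.finite_univ
    rwa [Set.ncard_univ, Nat.card_eq_fintype_card] at this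
  have hbddC : BddAbove Sc := by
    refine ⟨Fintype.card V, fun m hm => ?_⟩
    obtain ⟨s, hs⟩ := hm
    exact hs.2 ▸ Finset.card_le_univ s
  constructor
  · intro h
    obtain ⟨X, hX, hXcard⟩ := Nat.sSup_mem hFne hbddF
    rw [show sSup Sf = ftmvNum G k from rfl, h] at hXcard
    -- G is not complete
    have hnc : ∃ u v : V, u ≠ v ∧ ¬ G.Adj u v := by
      by_contra hc
      push_neg at hc
      have hmem : Fintype.card V ∈ Sf := by
        refine ⟨Set.univ, fun u _ v _ hne hnadj => absurd (hc u v hne) hnadj, ?_⟩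
        rw [Set.ncard_univ, Nat.card_eq_fintype_card]
      have hle := le_csSup hbddF hmem
      rw [show sSup Sf = ftmvNum G k from rfl, h] at hle
      omega
    obtain ⟨u, v, huv, hnadj⟩ := hnc
    have hclq : G.IsClique X := ftmv_clique hk hX hXcard hn1
    have hmemC : Fintype.card V - 1 ∈ Sc := by
      refine ⟨X.toFinset, ⟨by rwa [Set.coe_toFinset], ?_⟩⟩
      rw [← Set.ncard_eq_toFinset_card']
      exact hXcard
    have h1 : Fintype.card V - 1 ≤ cliqueNum' G := le_csSup hbddC hmemC
    have h2 : cliqueNum' G ≤ Fintype.card V - 1 := by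
      refine csSup_le hCne fun m hm => ?_
      obtain ⟨s, hs⟩ := hm
      have hle : m ≤ Fintype.card V := hs.2 ▸ Finset.card_le_univ s
      have hne : m ≠ Fintype.card V := by
        intro he
        have hsu : s = Finset.univ := by
          apply Finset.eq_univ_of_card
          rw [hs.2, he]
        have := hs.1 (by simp [hsu] : u ∈ (s : Set V)) (by simp [hsu] : v ∈ (s : Set V)) huv
        exact hnadj this
      omega
    exact le_antisymm h2 h1
  · intro h
    obtain ⟨s, hs⟩ := Nat.sSup_mem hCne hbddC
    rw [show sSup Sc = cliqueNum' G from rfl, h] at hs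
    have hnc : ∃ u v : V, u ≠ v ∧ ¬ G.Adj u v := by
      by_contra hc
      push_neg at hc
      have hmem : Fintype.card V ∈ Sc :=
        ⟨Finset.univ, ⟨fun a _ b _ hab => hc a b hab, Finset.card_univ⟩⟩
      have hle := le_csSup hbddC hmem
      rw [show sSup Sc = cliqueNum' G from rfl, h] at hle
      omega
    obtain ⟨u, v, huv, hnadj⟩ := hnc
    have hle : ftmvNum G k ≤ Fintype.card V - 1 := by
      refine csSup_le hFne fun m hm => ?_
      obtain ⟨X, hX, hm⟩ := hm
      exact hm ▸ ftmv_ncard_le hX huv hnadj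
    have hge : Fintype.card V - 1 ≤ ftmvNum G k := by
      refine le_csSup hbddF ⟨(s : Set V), ?_, ?_⟩
      · intro a ha b hb hab hnadj'
        exact absurd (hs.1 ha hb hab) hnadj'
      · rw [Set.ncard_coe_finset, hs.2]
    omega
end

section
/- Let k ≥ 1 and let G be a connected graph with fμᵏ(G) = n(G) − k − 1. If X is a maximum k-ftmv set and B is the set of vertices of X that are non-adjacent to at least one other vertex of X, then every vertex of B is adjacent to all k+1 vertices of V(G) \ X. -/
open SimpleGraph

variable {V : Type*}

theorem stmt11 [Fintype V] (G : SimpleGraph V) (hconn : G.Connected) (k : ℕ) (hk : 1 ≤ k)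
    (hval : ftmvNum G k = Fintype.card V - k - 1)
    (X : Set V) (hX : IsFtmvSet G k X) (hmax : X.ncard = Fintype.card V - k - 1) :
    ∀ b ∈ {u ∈ X | ∃ v ∈ X, v ≠ u ∧ ¬ G.Adj u v}, ∀ w : V, w ∉ X → G.Adj b w := by
  classical
  rintro b ⟨hbX, v, hvX, hvb, hnadj⟩ w hwX
  obtain ⟨P, hlen, hinX, hdisj⟩ := hX b hbX v hvX (Ne.symm hvb) hnadj
  -- each path has positive length
  have hpos : ∀ i : Fin (k + 1), 0 < (P i).1.length := by
    intro i
    rcases Nat.eq_zero_or_pos (P i).1.length with h | h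
    · exact absurd (SimpleGraph.Walk.eq_of_length_eq_zero h) (Ne.symm hvb)
    · exact h
  set s : Fin (k + 1) → V := fun i => (P i).1.getVert 1 with hs
  have hadj : ∀ i, G.Adj b (s i) := by
    intro i
    have := (P i).1.adj_getVert_succ (i := 0) (hpos i)
    simpa [SimpleGraph.Walk.getVert_zero] using this
  have hmem : ∀ i, s i ∈ (P i).1.support := by
    intro i
    rw [SimpleGraph.Walk.mem_support_iff_exists_getVert]
    exact ⟨1, rfl, hpos i⟩
  have hne_b : ∀ i, s i ≠ b := fun i h => G.irrefl (h ▸ hadj i)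
  have hne_v : ∀ i, s i ≠ v := fun i h => hnadj (h ▸ hadj i)
  have hnX : ∀ i, s i ∉ X := by
    intro i hsi
    rcases hinX i (s i) (hmem i) hsi with h | h
    · exact hne_b i h
    · exact hne_v i h
  have hinj : Function.Injective s := by
    intro i j hij
    by_contra hne
    rcases hdisj i j hne (s i) (hmem i) (hij ▸ hmem j) with h | h
    · exact hne_b i h
    · exact hne_v i h
  -- counting
  have hXfin : X.Finite := Set.toFinite X
  have hXpos : 1 ≤ X.ncard := by
    have : X.Nonempty := ⟨b, hbX⟩
    have := Set.ncard_pos (Set.toFinite X) |>.mpr this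
    omega
  have hsum : X.ncard + Xᶜ.ncard = Fintype.card V := by
    rw [Set.ncard_add_ncard_compl, Nat.card_eq_fintype_card]
  have hcompl : Xᶜ.ncard = k + 1 := by omega
  have hcard : Xᶜ.toFinset.card = k + 1 := by
    rw [← Set.ncard_eq_toFinset_card' Xᶜ]; exact hcompl
  set T : Finset V := Finset.image s Finset.univ with hT
  have hTsub : T ⊆ Xᶜ.toFinset := by
    intro x hx
    rw [hT, Finset.mem_image] at hx
    obtain ⟨i, _, rfl⟩ := hx
    simpa using hnX i
  have hTcard : T.card = k + 1 := by
    rw [hT, Finset.card_image_of_injective _ hinj, Finset.card_univ, Fintype.card_fin]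
  have hTeq : T = Xᶜ.toFinset := Finset.eq_of_subset_of_card_le hTsub (by omega)
  have hw : w ∈ T := by rw [hTeq]; simpa using hwX
  rw [hT, Finset.mem_image] at hw
  obtain ⟨i, _, rfl⟩ := hw
  exact hadj i
end

section
/- For the cycle graph C_n with n ≥ 4 and any k ≥ 1, fμᵏ(C_n) = 2. Moreover, for k ≥ 2, any maximum k-ftmv set consists of two adjacent vertices. -/
open SimpleGraph

variable {V : Type*}

/-!
A path in `C_n` never turns back, so it walks around the cycle with constant step
`+1` or `-1`. Two internally disjoint `u,v`-paths with `u, v` non-adjacent must leave `u` in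
different directions; hence there are no three of them (so for `k ≥ 2` the members of a
`k`-ftmv set are pairwise adjacent), and two of them together cover the whole cycle (so for
`k ≥ 1` a `k`-ftmv set containing a non-adjacent pair is that pair). As `C_n` is triangle-free
for `n ≥ 4`, a `k`-ftmv set has at most two vertices, and an edge attains this.
-/

open scoped Fin.NatCast Fin.CommRing

theorem eq_neg_of_ne_of_eq_one_or_eq_neg_one {R : Type*} [Ring R] {a b : R}
    (ha : a = 1 ∨ a = -1) (hb : b = 1 ∨ b = -1) (hab : a ≠ b) : b = -a := by
  rcases ha with rfl | rfl <;> rcases hb with rfl | rfl <;> simp_all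

namespace SimpleGraph

variable {n : ℕ}

theorem cycleGraph_adj_iff_sub {u v : Fin (n + 2)} :
    (cycleGraph (n + 2)).Adj u v ↔ v - u = 1 ∨ v - u = -1 := by
  rw [cycleGraph_adj, or_comm, ← neg_sub v u, neg_eq_iff_eq_neg]

theorem cycleGraph_cliqueFree_three : (cycleGraph (n + 4)).CliqueFree 3 := by
  intro t ht
  obtain ⟨a, b, c, hab, hac, hbc, -⟩ := is3Clique_iff.mp ht
  rw [cycleGraph_adj_iff_sub] at hab hac hbc
  -- the three steps `±1` around a triangle would sum to `0`, i.e. `±1 = 0` or `±3 = 0`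
  have hsum : (b - a) + (c - b) - (c - a) = 0 := by ring
  have h1 : (1 : Fin (n + 4)) ≠ 0 := one_ne_zero
  have h3 : (3 : Fin (n + 4)) ≠ 0 := by
    simp [Fin.ext_iff, Nat.mod_eq_of_lt (show 3 < n + 4 by omega)]
  rcases hab with h | h <;> rcases hbc with h' | h' <;> rcases hac with h'' | h'' <;>
    rw [h, h', h''] at hsum <;>
    first
      | exact h1 (by linear_combination hsum)
      | exact h1 (by linear_combination -hsum)
      | exact h3 (by linear_combination hsum)
      | exact h3 (by linear_combination -hsum)

namespace Walk

def StepsBy {R : Type*} [Ring R] {G : SimpleGraph R} {u v : R} (p : G.Walk u v) (c : R) :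
    Prop :=
  ∀ i ≤ p.length, p.getVert i = u + i * c

section StepsBy

variable {R : Type*} [Ring R] {G : SimpleGraph R} {u v c : R} {p : G.Walk u v}

theorem StepsBy.mem_support (hp : p.StepsBy c) {i : ℕ} (hi : i ≤ p.length) :
    u + i * c ∈ p.support :=
  hp i hi ▸ p.getVert_mem_support i

theorem StepsBy.eq_add (hp : p.StepsBy c) : v = u + p.length * c := by
  rw [← hp _ le_rfl, p.getVert_length]

end StepsBy

theorem IsPath.exists_stepsBy_of_cycleGraph {u v : Fin (n + 2)}
    {p : (cycleGraph (n + 2)).Walk u v} (hp : p.IsPath) :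
    ∃ c : Fin (n + 2), (c = 1 ∨ c = -1) ∧ p.StepsBy c := by
  rcases Nat.eq_zero_or_pos p.length with h0 | hpos
  · refine ⟨1, Or.inl rfl, fun i hi => ?_⟩
    obtain rfl : i = 0 := by omega
    simp
  have hstep : ∀ i < p.length, p.getVert (i + 1) - p.getVert i = 1 ∨
      p.getVert (i + 1) - p.getVert i = -1 :=
    fun i hi => cycleGraph_adj_iff_sub.mp (p.adj_getVert_succ hi)
  set c := p.getVert 1 - u with hc
  have hc1 : c = 1 ∨ c = -1 := by simpa [hc] using hstep 0 hpos
  refine ⟨c, hc1, ?_⟩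
  -- a path never turns back, since that would revisit the vertex before last
  have hstraight : ∀ i, i + 1 ≤ p.length →
      p.getVert i = u + i * c ∧ p.getVert (i + 1) = u + (i + 1 : ℕ) * c := by
    intro i
    induction i with
    | zero => intro _; simp [hc]
    | succ i ih =>
      intro hi
      obtain ⟨hi0, hi1⟩ := ih (by omega)
      refine ⟨hi1, ?_⟩
      push_cast at hi0 hi1 ⊢
      have hback : p.getVert (i + 2) ≠ p.getVert i := fun h =>
        absurd (hp.getVert_injOn (by simp; omega) (by simp; omega) h) (by omega)
      have hd : p.getVert (i + 2) - p.getVert (i + 1) = c := by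
        by_contra hne
        have hrev := eq_neg_of_ne_of_eq_one_or_eq_neg_one (hstep (i + 1) (by omega)) hc1 hne
        exact hback (by linear_combination hrev + hi1 - hi0)
      linear_combination hd + hi1
  intro i hi
  rcases Nat.eq_zero_or_pos i with rfl | hi0
  · simp
  obtain ⟨j, rfl⟩ : ∃ j, i = j + 1 := ⟨i - 1, by omega⟩
  exact (hstraight j hi).2

variable {u v : Fin (n + 2)} {p q : (cycleGraph (n + 2)).Walk u v} {c d : Fin (n + 2)}

theorem ne_of_stepsBy_of_internallyDisjoint (huv : u ≠ v)
    (hadj : ¬(cycleGraph (n + 2)).Adj u v) (hc : c = 1 ∨ c = -1)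
    (hpc : p.StepsBy c) (hqd : q.StepsBy d)
    (hpq : ∀ w ∈ p.support, w ∈ q.support → w = u ∨ w = v) : c ≠ d := by
  rintro rfl
  have hlen : ∀ {r : (cycleGraph (n + 2)).Walk u v}, r.StepsBy c → 1 ≤ r.length := by
    intro r hr
    by_contra! h0
    exact huv (by simpa [show r.length = 0 by omega] using hr.eq_add.symm)
  have hmem := hpq _ (by simpa using hpc.mem_support (hlen hpc))
    (by simpa using hqd.mem_support (hlen hqd))
  rcases hmem with h | h
  · rcases hc with rfl | rfl <;> simp at h
  · exact hadj (cycleGraph_adj_iff_sub.mpr (by rw [← h]; simpa using hc))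

theorem mem_support_or_mem_support_of_stepsBy_neg (huv : u ≠ v) (hp : p.IsPath)
    (hq : q.IsPath) (hc : c = 1 ∨ c = -1) (hpc : p.StepsBy c) (hqc : q.StepsBy (-c))
    (x : Fin (n + 2)) : x ∈ p.support ∨ x ∈ q.support := by
  have hcc : c * c = 1 := by rcases hc with rfl | rfl <;> simp
  have hpn : p.length < n + 2 := by simpa using hp.length_lt
  have hqn : q.length < n + 2 := by simpa using hq.length_lt
  have hp0 : p.length ≠ 0 := fun h0 => huv (by simpa [h0] using hpc.eq_add.symm)
  -- the two arcs together wind once around the cycle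
  have hsum : p.length + q.length = n + 2 := by
    have h : ((p.length + q.length : ℕ) : Fin (n + 2)) = 0 := by
      push_cast
      linear_combination c * (hqc.eq_add - hpc.eq_add) - (p.length + q.length) * hcc
    obtain ⟨m, hm⟩ := (Fin.natCast_eq_zero).mp h
    rcases m with _ | _ | m
    · omega
    · omega
    · nlinarith
  set m := ((x - u) * c).val with hm
  have hx : x = u + (m : Fin (n + 2)) * c := by
    rw [hm, Fin.cast_val_eq_self]
    linear_combination -(x - u) * hcc
  rcases le_or_gt m p.length with h | h
  · exact .inl (hx ▸ hpc.mem_support h)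
  · refine .inr ?_
    have hx' : x = u + ((n + 2 - m : ℕ) : Fin (n + 2)) * -c := by
      have hmn : m < n + 2 := Fin.isLt _
      rw [hx, Nat.cast_sub hmn.le, Fin.natCast_self]
      ring
    exact hx' ▸ hqc.mem_support (by omega)

end Walk

end SimpleGraph

theorem IsFtmvSet.of_isClique {G : SimpleGraph V} {k : ℕ} {X : Set V} (hX : G.IsClique X) :
    IsFtmvSet G k X :=
  fun _ hu _ hv huv hadj => absurd (hX hu hv huv) hadj

namespace IsFtmvSet

variable {n k : ℕ} {X : Set (Fin (n + 2))} {u v : Fin (n + 2)}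

theorem subset_pair_of_not_adj (hk : 1 ≤ k) (hX : IsFtmvSet (cycleGraph (n + 2)) k X)
    (hu : u ∈ X) (hv : v ∈ X) (huv : u ≠ v) (hadj : ¬(cycleGraph (n + 2)).Adj u v) :
    X ⊆ {u, v} := by
  obtain ⟨P, -, hPX, hdisj⟩ := hX u hu v hv huv hadj
  let i : Fin (k + 1) := ⟨0, by omega⟩
  let j : Fin (k + 1) := ⟨1, by omega⟩
  obtain ⟨c, hc, hPc⟩ := (P i).2.exists_stepsBy_of_cycleGraph
  obtain ⟨d, hd, hPd⟩ := (P j).2.exists_stepsBy_of_cycleGraph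
  have hcd := Walk.ne_of_stepsBy_of_internallyDisjoint huv hadj hc hPc hPd
    (hdisj i j (by simp [i, j]))
  rw [eq_neg_of_ne_of_eq_one_or_eq_neg_one hc hd hcd] at hPd
  intro x hx
  rcases Walk.mem_support_or_mem_support_of_stepsBy_neg huv (P i).2 (P j).2 hc hPc hPd x
    with h | h
  · simpa using hPX i x h hx
  · simpa using hPX j x h hx

theorem adj_of_two_le (hk : 2 ≤ k) (hX : IsFtmvSet (cycleGraph (n + 2)) k X)
    (hu : u ∈ X) (hv : v ∈ X) (huv : u ≠ v) : (cycleGraph (n + 2)).Adj u v := by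
  by_contra hadj
  obtain ⟨P, -, -, hdisj⟩ := hX u hu v hv huv hadj
  -- three internally disjoint paths, but only two directions to leave `u`
  let i : Fin (k + 1) := ⟨0, by omega⟩
  let j : Fin (k + 1) := ⟨1, by omega⟩
  let l : Fin (k + 1) := ⟨2, by omega⟩
  obtain ⟨c, hc, hPc⟩ := (P i).2.exists_stepsBy_of_cycleGraph
  obtain ⟨d, hd, hPd⟩ := (P j).2.exists_stepsBy_of_cycleGraph
  obtain ⟨e, he, hPe⟩ := (P l).2.exists_stepsBy_of_cycleGraph
  have hcd := Walk.ne_of_stepsBy_of_internallyDisjoint huv hadj hc hPc hPd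
    (hdisj i j (by simp [i, j]))
  have hce := Walk.ne_of_stepsBy_of_internallyDisjoint huv hadj hc hPc hPe
    (hdisj i l (by simp [i, l]))
  have hde := Walk.ne_of_stepsBy_of_internallyDisjoint huv hadj hd hPd hPe
    (hdisj j l (by simp [j, l]))
  exact hde ((eq_neg_of_ne_of_eq_one_or_eq_neg_one hc hd hcd).trans
    (eq_neg_of_ne_of_eq_one_or_eq_neg_one hc he hce).symm)

theorem ncard_le_two {X : Set (Fin (n + 4))} (hk : 1 ≤ k)
    (hX : IsFtmvSet (cycleGraph (n + 4)) k X) : X.ncard ≤ 2 := by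
  by_cases hcl : (cycleGraph (n + 4)).IsClique X
  · by_contra! h
    obtain ⟨a, b, c, ha, hb, hc, hab, hac, hbc⟩ := (Set.two_lt_ncard_iff X.toFinite).mp h
    refine cycleGraph_cliqueFree_three {a, b, c} ⟨?_, Finset.card_eq_three.mpr
      ⟨a, b, c, hab, hac, hbc, rfl⟩⟩
    exact hcl.subset (by simp [Set.insert_subset_iff, ha, hb, hc])
  · obtain ⟨u, hu, v, hv, huv, hadj⟩ :
        ∃ u ∈ X, ∃ v ∈ X, u ≠ v ∧ ¬(cycleGraph (n + 4)).Adj u v := by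
      simpa [IsClique, Set.Pairwise] using hcl
    exact (Set.ncard_le_ncard (hX.subset_pair_of_not_adj hk hu hv huv hadj)).trans
      (Set.ncard_pair huv).le

end IsFtmvSet

theorem stmt12 (n : ℕ) (hn : 4 ≤ n) (k : ℕ) (hk : 1 ≤ k) :
    ftmvNum (cycleGraph n) k = 2 ∧
    (2 ≤ k → ∀ X : Set (Fin n), IsFtmvSet (cycleGraph n) k X → X.ncard = 2 →
      ∃ u v : Fin n, (cycleGraph n).Adj u v ∧ X = {u, v}) := by
  obtain ⟨n, rfl⟩ : ∃ m, n = m + 4 := ⟨n - 4, by omega⟩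
  refine ⟨IsGreatest.csSup_eq ⟨⟨{0, 1}, ?_, Set.ncard_pair zero_ne_one⟩, ?_⟩, ?_⟩
  · exact IsFtmvSet.of_isClique (isClique_pair.mpr fun _ => by simp [cycleGraph_adj])
  · rintro _ ⟨X, hX, rfl⟩
    exact hX.ncard_le_two hk
  · intro hk2 X hX hX2
    obtain ⟨u, v, huv, rfl⟩ := Set.ncard_eq_two.mp hX2
    exact ⟨u, v, hX.adj_of_two_le hk2 (by simp) (by simp) huv, rfl⟩
end

section
/- For the grid graph P_2 □ P_n (Cartesian product of paths) with n ≥ 2 and any k ≥ 1, fμᵏ(P_2 □ P_n) = 2. -/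
open SimpleGraph

variable {V : Type*}

/-!
Distances in `P_m □ P_n` are ℓ¹ distances of the coordinates, so the first step of a
shortest `u,v`-path either changes the row toward `v` or moves one column toward `v`: there
are at most two such steps. Two internally disjoint shortest paths whose interiors avoid `X`
need two distinct first steps outside `X`. Hence two vertices of `X` in one row lie in
adjacent columns, and then a third vertex of `X` (necessarily in the other row) is reached
from one of them only through the row step, the column step being blocked by the other.
Conversely any edge is, vacuously, a `k`-ftmv set.
-/

namespace SimpleGraph

variable {G : SimpleGraph V} {u v : V}

def geodesicNeighborSet (G : SimpleGraph V) (u v : V) : Set V :=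
  {w | G.Adj u w ∧ G.dist w v + 1 = G.dist u v}

lemma Walk.snd_mem_geodesicNeighborSet {p : G.Walk u v} (hp : p.length = G.dist u v)
    (hne : u ≠ v) : p.snd ∈ G.geodesicNeighborSet u v := by
  cases p with
  | nil => exact absurd rfl hne
  | @cons _ w _ h q =>
    rw [snd_cons]
    refine ⟨h, ?_⟩
    have hq : G.dist w v ≤ q.length := dist_le q
    have htri : G.dist u v ≤ G.dist u w + G.dist w v := h.reachable.dist_triangle_left v
    rw [dist_eq_one_iff_adj.mpr h] at htri
    rw [Walk.length_cons] at hp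
    omega

lemma dist_boxProd {W : Type*} {H : SimpleGraph W} {x y : V × W}
    (hG : G.Reachable x.1 y.1) (hH : H.Reachable x.2 y.2) :
    (G □ H).dist x y = G.dist x.1 y.1 + H.dist x.2 y.2 := by
  have hGH : (G □ H).Reachable x y := reachable_boxProd.mpr ⟨hG, hH⟩
  have h : ((G □ H).dist x y : ℕ∞) = G.dist x.1 y.1 + H.dist x.2 y.2 := by
    rw [hGH.coe_dist_eq_edist, hG.coe_dist_eq_edist, hH.coe_dist_eq_edist, edist_boxProd]
  exact_mod_cast h

end SimpleGraph

lemma pathGraph_dist {n : ℕ} (a b : Fin n) : (pathGraph n).dist a b = Nat.dist a b := by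
  refine le_antisymm ?_ ?_
  · wlog hab : a ≤ b generalizing a b
    · rw [dist_comm, Nat.dist_comm]
      exact this b a (le_of_not_ge hab)
    obtain ⟨d, hd⟩ := Nat.exists_eq_add_of_le (Fin.le_def.mp hab)
    induction d generalizing b with
    | zero => simp [Fin.ext (show b.1 = a.1 by omega), Nat.dist]
    | succ d ih =>
      obtain ⟨b', hb'⟩ : ∃ b' : Fin n, (b' : ℕ) + 1 = b := ⟨⟨b - 1, by omega⟩, Nat.sub_add_cancel (by omega)⟩
      have hadj : (pathGraph n).Adj b' b := pathGraph_adj.mpr (Or.inl hb')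
      calc (pathGraph n).dist a b ≤ (pathGraph n).dist a b' + (pathGraph n).dist b' b :=
            hadj.reachable.dist_triangle_right a
        _ ≤ Nat.dist a b' + 1 := by
            rw [dist_eq_one_iff_adj.mpr hadj]
            exact Nat.add_le_add_right (ih b' (Fin.le_def.mpr (by omega)) (by omega)) 1
        _ = Nat.dist a b := by simp only [Nat.dist]; omega
  · obtain ⟨p, hp⟩ := (pathGraph_preconnected n a b).exists_walk_length_eq_dist
    rw [← hp]
    clear hp
    induction p with
    | nil => simp [Nat.dist]
    | cons h p ih =>
      rw [pathGraph_adj] at h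
      rw [Walk.length_cons]
      simp only [Nat.dist] at ih ⊢
      omega

lemma pathGraph_boxProd_dist {m n : ℕ} (u v : Fin m × Fin n) :
    (pathGraph m □ pathGraph n).dist u v = Nat.dist u.1 v.1 + Nat.dist u.2 v.2 := by
  rw [dist_boxProd (pathGraph_preconnected m _ _) (pathGraph_preconnected n _ _),
    pathGraph_dist, pathGraph_dist]

lemma isFtmvSet_pair_of_adj {G : SimpleGraph V} {k : ℕ} {a b : V} (h : G.Adj a b) :
    IsFtmvSet G k {a, b} := by
  rintro u (rfl | rfl) v (rfl | rfl) hne hnadj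
  · exact absurd rfl hne
  · exact absurd h hnadj
  · exact absurd h.symm hnadj
  · exact absurd rfl hne

/-- The second vertices of two internally disjoint shortest paths avoiding `X`. -/
lemma IsFtmvSet.nontrivial_geodesicNeighborSet_diff {G : SimpleGraph V} {k : ℕ} {X : Set V}
    (hX : IsFtmvSet G k X) (hk : 1 ≤ k) {u v : V} (hu : u ∈ X) (hv : v ∈ X)
    (huv : 1 < G.dist u v) : (G.geodesicNeighborSet u v \ X).Nontrivial := by
  obtain ⟨j, rfl⟩ : ∃ j, k = j + 1 := ⟨k - 1, by omega⟩
  have hne : u ≠ v := by rintro rfl; simp at huv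
  have hnadj : ¬ G.Adj u v := fun h ↦ by rw [dist_eq_one_iff_adj.mpr h] at huv; omega
  obtain ⟨P, hlen, hvis, hdisj⟩ := hX u hu v hv hne hnadj
  have hsnd : ∀ i, G.Adj u (P i).1.snd :=
    fun i ↦ Walk.adj_snd (Walk.not_nil_of_ne hne)
  have hsnd_ne : ∀ i, (P i).1.snd ≠ u ∧ (P i).1.snd ≠ v :=
    fun i ↦ ⟨(hsnd i).ne.symm, fun h ↦ hnadj (h ▸ hsnd i)⟩
  have hsnd_mem : ∀ i, (P i).1.snd ∈ G.geodesicNeighborSet u v \ X := fun i ↦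
    ⟨Walk.snd_mem_geodesicNeighborSet (hlen i) hne,
      fun hX ↦ (hvis i _ (Walk.getVert_mem_support _ 1) hX).elim (hsnd_ne i).1 (hsnd_ne i).2⟩
  refine ⟨_, hsnd_mem 0, _, hsnd_mem 1, fun h ↦ ?_⟩
  have hmem : (P 0).1.snd ∈ (P 1).1.support := h ▸ Walk.getVert_mem_support _ 1
  exact (hdisj 0 1 Fin.zero_ne_one _ (Walk.getVert_mem_support _ 1) hmem).elim
    (hsnd_ne 0).1 (hsnd_ne 0).2

section Grid

variable {m n : ℕ} {u v w : Fin m × Fin n}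

lemma mem_geodesicNeighborSet_pathGraph_boxProd
    (hw : w ∈ (pathGraph m □ pathGraph n).geodesicNeighborSet u v) :
    ((w.1 : ℕ) = u.1 ∧ ((u.2 : ℕ) + 1 = w.2 ∨ (w.2 : ℕ) + 1 = u.2) ∨
      (w.2 : ℕ) = u.2 ∧ ((u.1 : ℕ) + 1 = w.1 ∨ (w.1 : ℕ) + 1 = u.1)) ∧
    Nat.dist w.1 v.1 + Nat.dist w.2 v.2 + 1 = Nat.dist u.1 v.1 + Nat.dist u.2 v.2 := by
  obtain ⟨hadj, hdist⟩ := hw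
  rw [pathGraph_boxProd_dist, pathGraph_boxProd_dist] at hdist
  refine ⟨?_, hdist⟩
  rcases boxProd_adj.mp hadj with ⟨h1, h2⟩ | ⟨h1, h2⟩
  · exact Or.inr ⟨congrArg Fin.val h2.symm, pathGraph_adj.mp h1⟩
  · exact Or.inl ⟨congrArg Fin.val h2.symm, pathGraph_adj.mp h1⟩

variable {k : ℕ} {X : Set (Fin m × Fin n)}

lemma IsFtmvSet.dist_snd_le_one_of_fst_eq (hX : IsFtmvSet (pathGraph m □ pathGraph n) k X)
    (hk : 1 ≤ k) (hu : u ∈ X) (hv : v ∈ X) (hrow : u.1 = v.1) : Nat.dist u.2 v.2 ≤ 1 := by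
  have hrow' : (u.1 : ℕ) = v.1 := congrArg Fin.val hrow
  by_contra! hfar
  refine (hX.nontrivial_geodesicNeighborSet_diff hk hu hv ?_).not_subsingleton ?_
  · rw [pathGraph_boxProd_dist]
    simp only [Nat.dist] at hfar ⊢
    omega
  rintro w ⟨hw, -⟩ w' ⟨hw', -⟩
  obtain ⟨hstep, hdist⟩ := mem_geodesicNeighborSet_pathGraph_boxProd hw
  obtain ⟨hstep', hdist'⟩ := mem_geodesicNeighborSet_pathGraph_boxProd hw'
  simp only [Nat.dist] at hfar hdist hdist'
  exact Prod.ext (Fin.ext (by omega)) (Fin.ext (by omega))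

lemma IsFtmvSet.fst_eq_of_column_step_mem (hX : IsFtmvSet (pathGraph m □ pathGraph n) k X)
    (hk : 1 ≤ k) {x : Fin m × Fin n} (hu : u ∈ X) (hv : v ∈ X) (hx : x ∈ X) (hxrow : x.1 = u.1)
    (hxu : Nat.dist x.2 u.2 = 1) (hxv : Nat.dist x.2 v.2 + 1 = Nat.dist u.2 v.2) :
    u.1 = v.1 := by
  have hxrow' : (x.1 : ℕ) = u.1 := congrArg Fin.val hxrow
  by_contra! hrow
  have hrow' : (u.1 : ℕ) ≠ v.1 := fun h ↦ hrow (Fin.ext h)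
  have hrow_step : ∀ w ∈ (pathGraph m □ pathGraph n).geodesicNeighborSet u v \ X,
      (w.2 : ℕ) = u.2 ∧ ((u.1 : ℕ) + 1 = w.1 ∨ (w.1 : ℕ) + 1 = u.1) ∧
        Nat.dist w.1 v.1 + 1 = Nat.dist u.1 v.1 := by
    rintro w ⟨hw, hwX⟩
    obtain ⟨hstep | hstep, hdist⟩ := mem_geodesicNeighborSet_pathGraph_boxProd hw
    · have hwx : w = x := by
        simp only [Nat.dist] at hxu hxv hdist
        exact Prod.ext (Fin.ext (by omega)) (Fin.ext (by omega))
      exact absurd (hwx ▸ hx) hwX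
    · refine ⟨hstep.1, hstep.2, ?_⟩
      simp only [Nat.dist] at hdist ⊢
      omega
  refine (hX.nontrivial_geodesicNeighborSet_diff hk hu hv ?_).not_subsingleton ?_
  · rw [pathGraph_boxProd_dist]
    simp only [Nat.dist] at hxv ⊢
    omega
  intro w hw w' hw'
  obtain ⟨hcol, hstep, hdist⟩ := hrow_step w hw
  obtain ⟨hcol', hstep', hdist'⟩ := hrow_step w' hw'
  simp only [Nat.dist] at hdist hdist'
  exact Prod.ext (Fin.ext (by omega)) (Fin.ext (by omega))

end Grid

lemma IsFtmvSet.ncard_le_two_s13 {n k : ℕ} {X : Set (Fin 2 × Fin n)}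
    (hX : IsFtmvSet (pathGraph 2 □ pathGraph n) k X) (hk : 1 ≤ k) : X.ncard ≤ 2 := by
  by_contra! h
  obtain ⟨a, ha, b, hb, c, hc, hab, hac, hbc⟩ := (Set.two_lt_ncard X.toFinite).mp h
  wlog hrow : a.1 = b.1 generalizing a b c with hsymm
  · have hrow' : a.1 = c.1 ∨ b.1 = c.1 := by
      simp only [Fin.ext_iff] at hrow ⊢
      omega
    rcases hrow' with h | h
    · exact hsymm a ha c hc b hb hac hab (Ne.symm hbc) h
    · exact hsymm b hb c hc a ha hbc (Ne.symm hab) (Ne.symm hac) h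
  have hcol : (a.2 : ℕ) ≠ b.2 := fun h ↦ hab (Prod.ext hrow (Fin.ext h))
  have hab_near := hX.dist_snd_le_one_of_fst_eq hk ha hb hrow
  by_cases hcrow : a.1 = c.1
  · have hac_near := hX.dist_snd_le_one_of_fst_eq hk ha hc hcrow
    have hbc_near := hX.dist_snd_le_one_of_fst_eq hk hb hc (hrow ▸ hcrow)
    have hcol_ac : (a.2 : ℕ) ≠ c.2 := fun h ↦ hac (Prod.ext hcrow (Fin.ext h))
    have hcol_bc : (b.2 : ℕ) ≠ c.2 := fun h ↦ hbc (Prod.ext (hrow ▸ hcrow) (Fin.ext h))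
    simp only [Nat.dist] at hab_near hac_near hbc_near
    omega
  · have hba : Nat.dist b.2 a.2 = 1 := by
      simp only [Nat.dist] at hab_near ⊢
      omega
    have hstep : Nat.dist b.2 c.2 + 1 = Nat.dist a.2 c.2 ∨
        Nat.dist a.2 c.2 + 1 = Nat.dist b.2 c.2 := by
      simp only [Nat.dist] at hab_near ⊢
      omega
    rcases hstep with hstep | hstep
    · exact hcrow (hX.fst_eq_of_column_step_mem hk ha hc hb hrow.symm hba hstep)
    · exact hcrow (hrow ▸ hX.fst_eq_of_column_step_mem hk hb hc ha hrow
        (Nat.dist_comm _ _ ▸ hba) hstep)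

theorem stmt13 (n : ℕ) (hn : 2 ≤ n) (k : ℕ) (hk : 1 ≤ k) :
    ftmvNum (pathGraph 2 □ pathGraph n) k = 2 := by
  let A : Fin 2 × Fin n := (0, ⟨0, by omega⟩)
  let B : Fin 2 × Fin n := (1, ⟨0, by omega⟩)
  have hAB : (pathGraph 2 □ pathGraph n).Adj A B :=
    boxProd_adj.mpr (Or.inl ⟨pathGraph_adj.mpr (Or.inl rfl), rfl⟩)
  refine IsGreatest.csSup_eq ⟨⟨{A, B}, isFtmvSet_pair_of_adj hAB, Set.ncard_pair hAB.ne⟩, ?_⟩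
  rintro _ ⟨X, hX, rfl⟩
  exact hX.ncard_le_two_s13 hk
end

section
/- In the graph K_m × K_n (direct product of complete graphs) with k ≥ 0 and m, n ≥ k+5, the complement of the set Ā = {(i,i) : i ∈ [k+4]} is a k-ftmv set; together with the matching upper bound, fμᵏ(K_m × K_n) = mn − 4 − k. -/
/-!
Two non-adjacent vertices of `K_m × K_n` share a row or a column, and for `m, n ≥ 3` they have a
common neighbour; hence `X` is `k`-ftmv exactly when every such pair in `X` has at least `k + 1`
common neighbours outside `X`.

Lower bound: `Ā` meets every row and every column at most once, and the common neighbours of a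
pair sharing a line miss only the three lines through the pair, so they contain all but at most
three points of `Ā`, i.e. at least `k + 1` of them.

Upper bound: if `|Xᶜ| ≤ k + 3`, there are a row `i` and columns `a ≠ b` with
`(i, a), (i, b) ∈ X` such that row `i` and columns `a, b` together contain three points of
`Xᶜ` (or all of them): use a row avoiding `Xᶜ` when `Xᶜ` lies in two columns, and otherwise the
row of a point of `Xᶜ` completed by columns through further points of `Xᶜ` or by columns
avoiding `Xᶜ`. The common neighbours of `(i, a)` and `(i, b)` are the vertices off these three
lines, so at most `k` of them lie outside `X`.
-/

open SimpleGraph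

variable {V : Type*}

/-- The direct (tensor) product of complete graphs `K_m × K_n`:
`(i,j)` and `(i',j')` are adjacent iff `i ≠ i'` and `j ≠ j'`. -/
def KmKnDirect (m n : ℕ) : SimpleGraph (Fin m × Fin n) where
  Adj p q := p.1 ≠ q.1 ∧ p.2 ≠ q.2
  symm := ⟨fun p q h => ⟨h.1.symm, h.2.symm⟩⟩
  loopless := ⟨fun p h => h.1 rfl⟩

open Set

lemma exists_notMem_of_ncard_lt_card {α : Type*} {s : Set α} (h : s.ncard < Nat.card α) :
    ∃ a, a ∉ s := by
  by_contra! hs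
  rw [eq_univ_of_forall hs, ncard_univ] at h
  exact lt_irrefl _ h

lemma exists_ne_notMem_of_ncard_add_two_le_card {α : Type*} {s : Set α}
    (h : s.ncard + 2 ≤ Nat.card α) :
    ∃ a b, a ≠ b ∧ a ∉ s ∧ b ∉ s := by
  obtain ⟨a, ha⟩ := exists_notMem_of_ncard_lt_card (s := s) (by omega)
  obtain ⟨b, hb⟩ := exists_notMem_of_ncard_lt_card (s := insert a s)
    (by have := ncard_insert_le a s; omega)
  rw [mem_insert_iff, not_or] at hb
  exact ⟨a, b, Ne.symm hb.1, ha, hb.2⟩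

lemma ncard_inter_le_ncard_sub_three {α : Type*} {Y P : Set α} (hY : Y.Finite) {x y z : α}
    (hx : x ∈ Y) (hy : y ∈ Y) (hz : z ∈ Y) (hxy : x ≠ y) (hxz : x ≠ z) (hyz : y ≠ z)
    (hxP : x ∉ P) (hyP : y ∉ P) (hzP : z ∉ P) : (Y ∩ P).ncard ≤ Y.ncard - 3 := by
  have hsub : Y ∩ P ⊆ Y \ {x, y, z} := by
    rintro w ⟨hwY, hwP⟩
    refine ⟨hwY, ?_⟩
    rintro (rfl | rfl | rfl) <;> contradiction
  calc (Y ∩ P).ncard ≤ (Y \ {x, y, z}).ncard := ncard_le_ncard hsub hY.sdiff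
    _ = Y.ncard - 3 := by
      rw [ncard_sdiff (by simp [insert_subset_iff, hx, hy, hz]),
        ncard_eq_three.2 ⟨x, y, z, hxy, hxz, hyz, rfl⟩]

section RowColsCover

variable {α β : Type*} [Finite α] [Finite β] {Y : Set (α × β)}

lemma exists_row_cols_cover_of_spread (hβ : Y.ncard + 2 ≤ Nat.card β)
    (hspread : ∀ a b, a ≠ b → ∃ y ∈ Y, y.2 ≠ a ∧ y.2 ≠ b) :
    ∃ i a b, a ≠ b ∧ (i, a) ∉ Y ∧ (i, b) ∉ Y ∧
      (Y ∩ {y | y.1 ≠ i ∧ y.2 ≠ a ∧ y.2 ≠ b}).ncard ≤ Y.ncard - 3 := by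
  have hY := toFinite Y
  obtain ⟨f, f', hff', hf, hf'⟩ := exists_ne_notMem_of_ncard_add_two_le_card
    (s := Prod.snd '' Y) (by have := ncard_image_le (f := Prod.snd) hY; omega)
  have hfY : ∀ y ∈ Y, y.2 ≠ f := fun y hy h => hf ⟨y, hy, h⟩
  have hf'Y : ∀ y ∈ Y, y.2 ≠ f' := fun y hy h => hf' ⟨y, hy, h⟩
  obtain ⟨y₀, hy₀, -⟩ := hspread f f' hff'
  by_cases hrow : ∃ y₁ ∈ Y, y₁.1 = y₀.1 ∧ y₁.2 ≠ y₀.2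
  · obtain ⟨y₁, hy₁, hrow₁, hcol₁⟩ := hrow
    obtain ⟨y₃, hy₃, h₃₀, h₃₁⟩ := hspread y₀.2 y₁.2 hcol₁.symm
    by_cases hz : (y₀.1, y₃.2) ∈ Y
    · refine ⟨y₀.1, f, f', hff', fun h => hfY _ h rfl, fun h => hf'Y _ h rfl, ?_⟩
      exact ncard_inter_le_ncard_sub_three hY hy₀ hy₁ hz
        (ne_of_apply_ne Prod.snd hcol₁.symm)
        (ne_of_apply_ne Prod.snd h₃₀.symm) (ne_of_apply_ne Prod.snd h₃₁.symm)
        (fun h => h.1 rfl) (fun h => h.1 hrow₁) (fun h => h.1 rfl)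
    · refine ⟨y₀.1, y₃.2, f, hfY y₃ hy₃, hz, fun h => hfY _ h rfl, ?_⟩
      exact ncard_inter_le_ncard_sub_three hY hy₀ hy₁ hy₃
        (ne_of_apply_ne Prod.snd hcol₁.symm)
        (ne_of_apply_ne Prod.snd h₃₀.symm) (ne_of_apply_ne Prod.snd h₃₁.symm)
        (fun h => h.1 rfl) (fun h => h.1 hrow₁) (fun h => h.2.1 rfl)
  · push Not at hrow
    obtain ⟨y₂, hy₂, h₂₀, -⟩ := hspread y₀.2 f (hfY y₀ hy₀)
    obtain ⟨y₃, hy₃, h₃₀, h₃₂⟩ := hspread y₀.2 y₂.2 h₂₀.symm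
    have hfree : ∀ c ≠ y₀.2, (y₀.1, c) ∉ Y := fun c hc h => hc (hrow _ h rfl)
    refine ⟨y₀.1, y₂.2, y₃.2, h₃₂.symm, hfree _ h₂₀, hfree _ h₃₀, ?_⟩
    exact ncard_inter_le_ncard_sub_three hY hy₀ hy₂ hy₃ (ne_of_apply_ne Prod.snd h₂₀.symm)
      (ne_of_apply_ne Prod.snd h₃₀.symm) (ne_of_apply_ne Prod.snd h₃₂.symm)
      (fun h => h.1 rfl) (fun h => h.2.1 rfl) (fun h => h.2.2 rfl)

theorem exists_row_cols_cover (hα : Y.ncard < Nat.card α) (hβ : Y.ncard + 2 ≤ Nat.card β) :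
    ∃ i a b, a ≠ b ∧ (i, a) ∉ Y ∧ (i, b) ∉ Y ∧
      (Y ∩ {y | y.1 ≠ i ∧ y.2 ≠ a ∧ y.2 ≠ b}).ncard ≤ Y.ncard - 3 := by
  by_cases htwo : ∃ a b, a ≠ b ∧ ∀ y ∈ Y, y.2 = a ∨ y.2 = b
  · obtain ⟨a, b, hab, hcols⟩ := htwo
    obtain ⟨i, hi⟩ := exists_notMem_of_ncard_lt_card (s := Prod.fst '' Y)
      ((ncard_image_le (toFinite Y)).trans_lt hα)
    refine ⟨i, a, b, hab, fun h => hi ⟨_, h, rfl⟩, fun h => hi ⟨_, h, rfl⟩, ?_⟩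
    have hcover : Y ∩ {y | y.1 ≠ i ∧ y.2 ≠ a ∧ y.2 ≠ b} = ∅ :=
      eq_empty_iff_forall_notMem.2 fun y ⟨hy, _, ha, hb⟩ => (hcols y hy).elim ha hb
    simp [hcover]
  push Not at htwo
  exact exists_row_cols_cover_of_spread hβ htwo

end RowColsCover

namespace SimpleGraph

variable {G : SimpleGraph V} {u v w : V}

lemma Walk.exists_support_eq_of_length_eq_two (p : G.Walk u v) (hp : p.length = 2) :
    ∃ w, G.Adj u w ∧ G.Adj w v ∧ p.support = [u, w, v] := by
  match p, hp with
  | .cons h₁ (.cons h₂ .nil), _ => exact ⟨_, h₁, h₂, rfl⟩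

lemma dist_eq_two_of_mem_commonNeighbors (huv : u ≠ v) (hadj : ¬G.Adj u v)
    (hw : w ∈ G.commonNeighbors u v) : G.dist u v = 2 := by
  simp [dist, edist_eq_two_iff.2 ⟨huv, hadj, w, hw⟩]

end SimpleGraph

lemma IsFtmvSet.succ_le_ncard_commonNeighbors_sdiff [Finite V] {G : SimpleGraph V} {k : ℕ}
    {X : Set V} (hX : IsFtmvSet G k X) {u v : V} (hu : u ∈ X) (hv : v ∈ X) (huv : u ≠ v)
    (hadj : ¬G.Adj u v) (hcommon : (G.commonNeighbors u v).Nonempty) :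
    k + 1 ≤ (G.commonNeighbors u v \ X).ncard := by
  obtain ⟨P, hlen, hout, hdisj⟩ := hX u hu v hv huv hadj
  have hdist := dist_eq_two_of_mem_commonNeighbors huv hadj hcommon.some_mem
  choose w huw hwv hsupp using fun i =>
    (P i).1.exists_support_eq_of_length_eq_two (hlen i ▸ hdist)
  have hw_ne : ∀ i, w i ≠ u ∧ w i ≠ v := fun i => ⟨(huw i).ne', (hwv i).ne⟩
  have hwX : ∀ i, w i ∉ X := fun i hwX =>
    (hout i (w i) (by simp [hsupp]) hwX).elim (hw_ne i).1 (hw_ne i).2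
  have hinj : Function.Injective w := fun i j hij => by
    by_contra hne
    exact (hdisj i j hne (w i) (by simp [hsupp]) (by simp [hsupp, hij])).elim
      (hw_ne i).1 (hw_ne i).2
  calc k + 1 = (Set.range w).ncard := by rw [ncard_range_of_injective hinj, Nat.card_fin]
    _ ≤ (G.commonNeighbors u v \ X).ncard := ncard_le_ncard (range_subset_iff.2 fun i =>
      ⟨G.mem_commonNeighbors.2 ⟨huw i, (hwv i).symm⟩, hwX i⟩)

lemma isFtmvSet_of_succ_le_ncard_commonNeighbors_sdiff [Finite V] {G : SimpleGraph V} {k : ℕ}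
    {X : Set V} (h : ∀ u ∈ X, ∀ v ∈ X, u ≠ v → ¬G.Adj u v →
      k + 1 ≤ (G.commonNeighbors u v \ X).ncard) :
    IsFtmvSet G k X := by
  intro u hu v hv huv hadj
  have : Fintype ↥(G.commonNeighbors u v \ X) := Fintype.ofFinite _
  obtain ⟨w⟩ : Nonempty (Fin (k + 1) ↪ ↥(G.commonNeighbors u v \ X)) :=
    Function.Embedding.nonempty_of_card_le (by
      rw [Fintype.card_fin, ← Nat.card_eq_fintype_card, Nat.card_coe_set_eq]
      exact h u hu v hv huv hadj)
  have hadj₁ : ∀ i, G.Adj u (w i) := fun i => (G.mem_commonNeighbors.1 (w i).2.1).1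
  have hadj₂ : ∀ i, G.Adj (w i) v := fun i => (G.mem_commonNeighbors.1 (w i).2.1).2.symm
  have hdist := dist_eq_two_of_mem_commonNeighbors huv hadj (w 0).2.1
  refine ⟨fun i => ⟨.cons (hadj₁ i) (.cons (hadj₂ i) .nil), ?_⟩, fun i => by simp [hdist],
    ?_, ?_⟩
  · simp [(hadj₁ i).ne, (hadj₂ i).ne, huv]
  · intro i x hx hxX
    simp only [Walk.support_cons, Walk.support_nil, List.mem_cons, List.not_mem_nil] at hx
    grind
  · intro i j hij x hxi hxj
    simp only [Walk.support_cons, Walk.support_nil, List.mem_cons, List.not_mem_nil] at hxi hxj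
    grind

namespace KmKnDirect

variable {m n : ℕ}

lemma mem_commonNeighbors {u v w : Fin m × Fin n} :
    w ∈ (KmKnDirect m n).commonNeighbors u v ↔
      w.1 ∉ ({u.1, v.1} : Set (Fin m)) ∧ w.2 ∉ ({u.2, v.2} : Set (Fin n)) := by
  simp only [SimpleGraph.mem_commonNeighbors, KmKnDirect, mem_insert_iff, mem_singleton_iff]
  tauto

lemma commonNeighbors_nonempty (hm : 3 ≤ m) (hn : 3 ≤ n) (u v : Fin m × Fin n) :
    ((KmKnDirect m n).commonNeighbors u v).Nonempty := by
  obtain ⟨i, hi⟩ := exists_notMem_of_ncard_lt_card (s := ({u.1, v.1} : Set (Fin m)))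
    (by have := ncard_insert_le u.1 {v.1}; simp_all; omega)
  obtain ⟨j, hj⟩ := exists_notMem_of_ncard_lt_card (s := ({u.2, v.2} : Set (Fin n)))
    (by have := ncard_insert_le u.2 {v.2}; simp_all; omega)
  exact ⟨(i, j), mem_commonNeighbors.2 ⟨hi, hj⟩⟩

-- The points of `A` outside the common neighbourhood lie on the (at most three) lines through
-- `u` and `v`, each of which meets `A` at most once.
lemma ncard_sdiff_commonNeighbors_le_three {A : Set (Fin m × Fin n)} (hA₁ : InjOn Prod.fst A)
    (hA₂ : InjOn Prod.snd A) {u v : Fin m × Fin n} (hadj : ¬(KmKnDirect m n).Adj u v) :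
    (A \ (KmKnDirect m n).commonNeighbors u v).ncard ≤ 3 := by
  have hsub : A \ (KmKnDirect m n).commonNeighbors u v ⊆
      (A ∩ Prod.fst ⁻¹' {u.1, v.1}) ∪ (A ∩ Prod.snd ⁻¹' {u.2, v.2}) := by
    rintro w ⟨hwA, hw⟩
    rw [mem_commonNeighbors, not_and_or, not_not, not_not] at hw
    exact hw.imp (⟨hwA, ·⟩) (⟨hwA, ·⟩)
  have h₁ : (A ∩ Prod.fst ⁻¹' {u.1, v.1}).ncard ≤ ({u.1, v.1} : Set (Fin m)).ncard :=
    ncard_le_ncard_of_injOn _ (fun _ h => h.2) (hA₁.mono inter_subset_left)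
  have h₂ : (A ∩ Prod.snd ⁻¹' {u.2, v.2}).ncard ≤ ({u.2, v.2} : Set (Fin n)).ncard :=
    ncard_le_ncard_of_injOn _ (fun _ h => h.2) (hA₂.mono inter_subset_left)
  have hline : u.1 = v.1 ∨ u.2 = v.2 := by
    by_contra! h
    exact hadj h
  have hpairs : ({u.1, v.1} : Set (Fin m)).ncard + ({u.2, v.2} : Set (Fin n)).ncard ≤ 3 := by
    have hpair₁ := ncard_insert_le u.1 {v.1}
    have hpair₂ := ncard_insert_le u.2 {v.2}
    rw [ncard_singleton] at hpair₁ hpair₂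
    rcases hline with h | h <;> rw [h, pair_eq_singleton, ncard_singleton] <;> omega
  have := (ncard_le_ncard hsub).trans (ncard_union_le _ _)
  omega

lemma isFtmvSet_compl_of_injOn {k : ℕ} {A : Set (Fin m × Fin n)} (hA₁ : InjOn Prod.fst A)
    (hA₂ : InjOn Prod.snd A) (hA : k + 4 ≤ A.ncard) : IsFtmvSet (KmKnDirect m n) k Aᶜ := by
  refine isFtmvSet_of_succ_le_ncard_commonNeighbors_sdiff fun u _ v _ _ hadj => ?_
  have := ncard_inter_add_ncard_sdiff_eq_ncard A ((KmKnDirect m n).commonNeighbors u v)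
  have := ncard_sdiff_commonNeighbors_le_three hA₁ hA₂ hadj
  rw [sdiff_compl, inter_comm]
  omega

lemma add_four_le_ncard_compl_of_isFtmvSet {k : ℕ} (hm : k + 4 ≤ m) (hn : k + 5 ≤ n)
    {X : Set (Fin m × Fin n)} (hX : IsFtmvSet (KmKnDirect m n) k X) : k + 4 ≤ Xᶜ.ncard := by
  by_contra! hY
  obtain ⟨i, a, b, hab, ha, hb, hcover⟩ := exists_row_cols_cover (Y := Xᶜ)
    (by rw [Nat.card_fin]; omega) (by rw [Nat.card_fin]; omega)
  have hcommon : (KmKnDirect m n).commonNeighbors (i, a) (i, b) \ X =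
      Xᶜ ∩ {y | y.1 ≠ i ∧ y.2 ≠ a ∧ y.2 ≠ b} := by
    ext y
    simp only [mem_sdiff, KmKnDirect.mem_commonNeighbors, mem_inter_iff, mem_compl_iff,
      mem_ofPred_eq, mem_insert_iff, mem_singleton_iff]
    tauto
  have := hX.succ_le_ncard_commonNeighbors_sdiff (not_not.1 ha) (not_not.1 hb)
    (fun h => hab (congrArg Prod.snd h)) (fun h => h.1 rfl)
    (commonNeighbors_nonempty (by omega) (by omega) _ _)
  rw [hcommon] at this
  omega

end KmKnDirect

/-- The paper's `Ā = {(i, i) : i ∈ [r]}`. -/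
def diagonalPrefix (m n r : ℕ) : Set (Fin m × Fin n) :=
  {p | (p.1 : ℕ) = p.2 ∧ (p.1 : ℕ) < r}

namespace diagonalPrefix

variable {m n r : ℕ}

lemma injOn_fst : InjOn Prod.fst (diagonalPrefix m n r) := fun p hp q hq h =>
  Prod.ext h (Fin.ext (by have := congrArg Fin.val h; simp_all [diagonalPrefix]))

lemma injOn_snd : InjOn Prod.snd (diagonalPrefix m n r) := fun p hp q hq h =>
  Prod.ext (Fin.ext (by have := congrArg Fin.val h; simp_all [diagonalPrefix])) h

lemma ncard_eq (hm : r ≤ m) (hn : r ≤ n) : (diagonalPrefix m n r).ncard = r := by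
  have hrange : range (fun t : Fin r => (Fin.castLE hm t, Fin.castLE hn t)) =
      diagonalPrefix m n r := by
    ext p
    simp only [mem_range, diagonalPrefix, mem_ofPred_eq, Prod.ext_iff, Fin.ext_iff,
      Fin.val_castLE]
    exact ⟨fun ⟨t, h₁, h₂⟩ => ⟨h₁ ▸ h₂ ▸ rfl, h₁ ▸ t.2⟩,
      fun ⟨h₁, h₂⟩ => ⟨⟨p.1, h₂⟩, rfl, h₁⟩⟩
  have hinj : Function.Injective fun t : Fin r => (Fin.castLE hm t, Fin.castLE hn t) :=
    fun s t h => Fin.ext (by simpa [Fin.ext_iff] using congrArg Prod.fst h)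
  rw [← hrange, ncard_range_of_injective hinj, Nat.card_fin]

end diagonalPrefix

theorem stmt16 (k m n : ℕ) (hm : k + 5 ≤ m) (hn : k + 5 ≤ n) :
    IsFtmvSet (KmKnDirect m n) k
      {p : Fin m × Fin n | ¬ ((p.1 : ℕ) = (p.2 : ℕ) ∧ (p.1 : ℕ) < k + 4)} ∧
    ftmvNum (KmKnDirect m n) k = m * n - 4 - k := by
  have hA : IsFtmvSet (KmKnDirect m n) k (diagonalPrefix m n (k + 4))ᶜ :=
    KmKnDirect.isFtmvSet_compl_of_injOn diagonalPrefix.injOn_fst diagonalPrefix.injOn_snd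
      (diagonalPrefix.ncard_eq (by omega) (by omega)).ge
  have hcard (X : Set (Fin m × Fin n)) : X.ncard = m * n - Xᶜ.ncard := by
    simpa using ncard_compl Xᶜ
  refine ⟨hA, IsGreatest.csSup_eq ⟨⟨_, hA, ?_⟩, ?_⟩⟩
  · rw [hcard, compl_compl, diagonalPrefix.ncard_eq (by omega) (by omega)]
    omega
  · rintro _ ⟨X, hX, rfl⟩
    have := KmKnDirect.add_four_le_ncard_compl_of_isFtmvSet (by omega) hn hX
    rw [hcard]
    omega
end

section
/- For the Hamming graph K_m □ K_n with m, n ≥ 2 and any k ≥ 2, fμᵏ(K_m □ K_n) = max{m, n}. -/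
open SimpleGraph

variable {V : Type*}

lemma walk_len2_decomp {G : SimpleGraph V} {u v : V} (W : G.Walk u v) (h : W.length = 2) :
    ∃ w, G.Adj u w ∧ G.Adj w v ∧ W.support = [u, w, v] := by
  cases W with
  | nil => simp at h
  | cons h1 q =>
    cases q with
    | nil => simp at h
    | cons h2 q2 =>
      cases q2 with
      | nil => exact ⟨_, h1, h2, rfl⟩
      | cons h3 q3 => simp [SimpleGraph.Walk.length_cons] at h

variable {m n k : ℕ}

/-- With `k ≥ 2`, any k-ftmv set of K_m □ K_n is a clique. -/
lemma ftmv_pairwise_adj (hk : 2 ≤ k) {X : Set (Fin m × Fin n)}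
    (hX : IsFtmvSet ((⊤ : SimpleGraph (Fin m)) □ (⊤ : SimpleGraph (Fin n))) k X) :
    ∀ u ∈ X, ∀ v ∈ X, u ≠ v →
      ((⊤ : SimpleGraph (Fin m)) □ (⊤ : SimpleGraph (Fin n))).Adj u v := by
  set G := ((⊤ : SimpleGraph (Fin m)) □ (⊤ : SimpleGraph (Fin n))) with hG
  intro u hu v hv huv
  by_contra hna
  obtain ⟨P, hlen, _, hdisj⟩ := hX u hu v hv huv hna
  have h12 : u.1 ≠ v.1 ∧ u.2 ≠ v.2 := by
    rw [hG, boxProd_adj] at hna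
    simp only [top_adj, not_or, not_and, ne_eq] at hna
    have : ¬(u.1 = v.1 ∧ u.2 = v.2) := fun h => huv (Prod.ext h.1 h.2)
    tauto
  -- the two midpoints
  set a : Fin m × Fin n := (u.1, v.2) with ha
  set b : Fin m × Fin n := (v.1, u.2) with hb
  have hadj_ub : G.Adj u b := by
    rw [hG, boxProd_adj]; left; exact ⟨h12.1, rfl⟩
  have hadj_bv : G.Adj b v := by
    rw [hG, boxProd_adj]; right; exact ⟨h12.2, rfl⟩
  have hdist : G.dist u v = 2 := by
    have hle : G.dist u v ≤ 2 :=
      SimpleGraph.dist_le (SimpleGraph.Walk.cons hadj_ub (SimpleGraph.Walk.cons hadj_bv .nil))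
    have hr : G.Reachable u v := ⟨(P 0).1⟩
    have h0 : G.dist u v ≠ 0 := fun h => huv (hr.dist_eq_zero_iff.mp h)
    have h1 : G.dist u v ≠ 1 := fun h => hna (SimpleGraph.dist_eq_one_iff_adj.mp h)
    omega
  -- each path's midpoint is a or b
  have hmid : ∀ i : Fin (k+1), ∃ w, (w = a ∨ w = b) ∧ (P i).1.support = [u, w, v] := by
    intro i
    obtain ⟨w, hw1, hw2, hsup⟩ := walk_len2_decomp (P i).1 (by rw [hlen i, hdist])
    refine ⟨w, ?_, hsup⟩
    rw [hG, boxProd_adj] at hw1 hw2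
    simp only [top_adj] at hw1 hw2
    rcases hw1 with ⟨_, h2⟩ | ⟨_, h1⟩
    · -- u.2 = w.2 : second coords equal, so w = (v.1, u.2) = b
      right
      rcases hw2 with ⟨_, h2'⟩ | ⟨hne2, h1'⟩
      · exact absurd (h2.trans h2') h12.2
      · exact Prod.ext h1' h2.symm
    · -- u.1 = w.1, so w = (u.1, v.2) = a
      left
      rcases hw2 with ⟨hne1, h2'⟩ | ⟨_, h1'⟩
      · exact Prod.ext h1.symm h2'
      · exact absurd (h1.trans h1') h12.1
  -- indices 0,1,2
  have hk3 : 3 ≤ k + 1 := by omega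
  let i0 : Fin (k+1) := ⟨0, by omega⟩
  let i1 : Fin (k+1) := ⟨1, by omega⟩
  let i2 : Fin (k+1) := ⟨2, by omega⟩
  obtain ⟨w0, hc0, hs0⟩ := hmid i0
  obtain ⟨w1, hc1, hs1⟩ := hmid i1
  obtain ⟨w2, hc2, hs2⟩ := hmid i2
  have hanu : a ≠ u := fun h => h12.2 (by rw [ha] at h; exact (Prod.ext_iff.mp h).2.symm)
  have hanv : a ≠ v := fun h => h12.1 (by rw [ha] at h; exact (Prod.ext_iff.mp h).1)
  have hbnu : b ≠ u := fun h => h12.1 (by rw [hb] at h; exact (Prod.ext_iff.mp h).1.symm)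
  have hbnv : b ≠ v := fun h => h12.2 (by rw [hb] at h; exact (Prod.ext_iff.mp h).2)
  have key : ∀ (i j : Fin (k+1)) (wi wj : Fin m × Fin n), i ≠ j →
      (P i).1.support = [u, wi, v] → (P j).1.support = [u, wj, v] →
      wi ≠ wj := by
    intro i j wi wj hij hi hj heq
    have hm1 : wi ∈ (P i).1.support := by rw [hi]; simp
    have hm2 : wi ∈ (P j).1.support := by rw [hj, heq]; simp
    have hnd := (P i).2.support_nodup
    rw [hi] at hnd
    rcases hdisj i j hij wi hm1 hm2 with h | h <;> simp [h] at hnd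
  have h01 : w0 ≠ w1 := key i0 i1 w0 w1 (by simp [i0, i1, Fin.ext_iff]) hs0 hs1
  have h02 : w0 ≠ w2 := key i0 i2 w0 w2 (by simp [i0, i2, Fin.ext_iff]) hs0 hs2
  have h12' : w1 ≠ w2 := key i1 i2 w1 w2 (by simp [i1, i2, Fin.ext_iff]) hs1 hs2
  rcases hc0 with h0 | h0 <;> rcases hc1 with h1 | h1 <;> rcases hc2 with h2 | h2 <;>
    simp_all

lemma row_ncard (j : Fin n) : {p : Fin m × Fin n | p.2 = j}.ncard = m := by
  have : {p : Fin m × Fin n | p.2 = j} = (fun i : Fin m => (i, j)) '' Set.univ := by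
    ext p
    simp [Prod.ext_iff, eq_comm]
  rw [this, Set.ncard_image_of_injective _ (fun x y h => (Prod.ext_iff.mp h).1),
    Set.ncard_univ, Nat.card_eq_fintype_card, Fintype.card_fin]

lemma col_ncard (i : Fin m) : {p : Fin m × Fin n | p.1 = i}.ncard = n := by
  have : {p : Fin m × Fin n | p.1 = i} = (fun j : Fin n => (i, j)) '' Set.univ := by
    ext p
    simp [Prod.ext_iff, eq_comm]
  rw [this, Set.ncard_image_of_injective _ (fun x y h => (Prod.ext_iff.mp h).2),
    Set.ncard_univ, Nat.card_eq_fintype_card, Fintype.card_fin]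

/-- A clique in K_m □ K_n has at most `max m n` vertices. -/
lemma clique_card_le {X : Set (Fin m × Fin n)}
    (hadj : ∀ u ∈ X, ∀ v ∈ X, u ≠ v →
      ((⊤ : SimpleGraph (Fin m)) □ (⊤ : SimpleGraph (Fin n))).Adj u v) :
    X.ncard ≤ max m n := by
  rcases Set.eq_empty_or_nonempty X with hE | ⟨x, hx⟩
  · simp [hE]
  by_cases hrow : ∃ a ∈ X, ∃ b ∈ X, a.1 ≠ b.1
  · -- all elements lie in row a.2
    obtain ⟨a, haX, b, hbX, hab1⟩ := hrow
    have hab : a ≠ b := fun h => hab1 (congrArg Prod.fst h)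
    have hab2 : a.2 = b.2 := by
      have := hadj a haX b hbX hab
      rw [boxProd_adj] at this
      simp only [top_adj] at this
      rcases this with ⟨_, h⟩ | ⟨_, h⟩
      · exact h
      · exact absurd h hab1
    have hsub : X ⊆ {p : Fin m × Fin n | p.2 = a.2} := by
      intro c hc
      by_contra hc2
      simp only [Set.mem_setOf_eq] at hc2
      have hca : c ≠ a := fun h => hc2 (congrArg Prod.snd h)
      have hcb : c ≠ b := fun h => hc2 ((congrArg Prod.snd h).trans hab2.symm)
      have h1 := hadj c hc a haX hca
      have h2 := hadj c hc b hbX hcb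
      rw [boxProd_adj] at h1 h2
      simp only [top_adj] at h1 h2
      have e1 : c.1 = a.1 := by
        rcases h1 with ⟨_, h⟩ | ⟨_, h⟩
        · exact absurd h hc2
        · exact h
      have e2 : c.1 = b.1 := by
        rcases h2 with ⟨_, h⟩ | ⟨_, h⟩
        · exact absurd (h.trans hab2.symm) hc2
        · exact h
      exact hab1 (e1.symm.trans e2)
    calc X.ncard ≤ {p : Fin m × Fin n | p.2 = a.2}.ncard :=
          Set.ncard_le_ncard hsub (Set.toFinite _)
      _ = m := row_ncard a.2
      _ ≤ max m n := le_max_left m n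
  · -- all elements share first coordinate x.1
    push_neg at hrow
    have hsub : X ⊆ {p : Fin m × Fin n | p.1 = x.1} := by
      intro c hc
      exact hrow c hc x hx
    calc X.ncard ≤ {p : Fin m × Fin n | p.1 = x.1}.ncard :=
          Set.ncard_le_ncard hsub (Set.toFinite _)
      _ = n := col_ncard x.1
      _ ≤ max m n := le_max_right m n

lemma row_ftmv (hn : 2 ≤ n) (j : Fin n) (k : ℕ) :
    IsFtmvSet ((⊤ : SimpleGraph (Fin m)) □ (⊤ : SimpleGraph (Fin n))) k
      {p : Fin m × Fin n | p.2 = j} := by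
  intro u hu v hv hne hna
  exfalso
  apply hna
  rw [boxProd_adj]
  left
  simp only [Set.mem_setOf_eq] at hu hv
  exact ⟨fun h => hne (Prod.ext h (hu.trans hv.symm)), hu.trans hv.symm⟩

lemma col_ftmv (hm : 2 ≤ m) (i : Fin m) (k : ℕ) :
    IsFtmvSet ((⊤ : SimpleGraph (Fin m)) □ (⊤ : SimpleGraph (Fin n))) k
      {p : Fin m × Fin n | p.1 = i} := by
  intro u hu v hv hne hna
  exfalso
  apply hna
  rw [boxProd_adj]
  right
  simp only [Set.mem_setOf_eq] at hu hv
  exact ⟨fun h => hne (Prod.ext (hu.trans hv.symm) h), hu.trans hv.symm⟩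

theorem stmt17' (m n : ℕ) (hm : 2 ≤ m) (hn : 2 ≤ n) (k : ℕ) (hk : 2 ≤ k) :
    sSup {N | ∃ X : Set (Fin m × Fin n),
      IsFtmvSet ((⊤ : SimpleGraph (Fin m)) □ (⊤ : SimpleGraph (Fin n))) k X ∧ X.ncard = N}
      = max m n := by
  set S := {N | ∃ X : Set (Fin m × Fin n),
      IsFtmvSet ((⊤ : SimpleGraph (Fin m)) □ (⊤ : SimpleGraph (Fin n))) k X ∧ X.ncard = N}
    with hS
  have hbdd : ∀ N ∈ S, N ≤ max m n := by
    rintro N ⟨X, hX, rfl⟩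
    exact clique_card_le (ftmv_pairwise_adj hk hX)
  have hmem : max m n ∈ S := by
    rcases max_cases m n with ⟨hmax, _⟩ | ⟨hmax, _⟩ <;> rw [hmax]
    · exact ⟨{p : Fin m × Fin n | p.2 = ⟨0, by omega⟩}, row_ftmv hn _ k, row_ncard _⟩
    · exact ⟨{p : Fin m × Fin n | p.1 = ⟨0, by omega⟩}, col_ftmv hm _ k, col_ncard _⟩
  exact le_antisymm (csSup_le ⟨max m n, hmem⟩ hbdd) (le_csSup ⟨max m n, hbdd⟩ hmem)

theorem stmt17 (m n : ℕ) (hm : 2 ≤ m) (hn : 2 ≤ n) (k : ℕ) (hk : 2 ≤ k) :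
    ftmvNum ((⊤ : SimpleGraph (Fin m)) □ (⊤ : SimpleGraph (Fin n))) k = max m n := by
  unfold ftmvNum
  exact stmt17' m n hm hn k hk
end

section
/- For the Hamming graph K_m □ K_n with m, n ≥ 2, fμ¹(K_m □ K_n) = m + n − 2. -/
open SimpleGraph

variable {V : Type*}

lemma hg_adj {m n : ℕ} {p q : Fin m × Fin n} :
    ((⊤ : SimpleGraph (Fin m)) □ (⊤ : SimpleGraph (Fin n))).Adj p q ↔
      (p.1 ≠ q.1 ∧ p.2 = q.2) ∨ (p.2 ≠ q.2 ∧ p.1 = q.1) := by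
  simp [boxProd_adj]

lemma hg_nonadj {m n : ℕ} {p q : Fin m × Fin n} (hne : p ≠ q)
    (h : ¬ ((⊤ : SimpleGraph (Fin m)) □ (⊤ : SimpleGraph (Fin n))).Adj p q) :
    p.1 ≠ q.1 ∧ p.2 ≠ q.2 := by
  rw [hg_adj] at h
  push_neg at h
  have key : p.1 ≠ q.1 := fun h1 => hne (Prod.ext h1 (not_not.mp (fun h2 => h.2 h2 h1)))
  exact ⟨key, h.1 key⟩

lemma hg_dist_two {m n : ℕ} {p q : Fin m × Fin n} (h1 : p.1 ≠ q.1) (h2 : p.2 ≠ q.2) :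
    ((⊤ : SimpleGraph (Fin m)) □ (⊤ : SimpleGraph (Fin n))).dist p q = 2 := by
  set G := (⊤ : SimpleGraph (Fin m)) □ (⊤ : SimpleGraph (Fin n)) with hG
  have ha1 : G.Adj p (p.1, q.2) := hg_adj.mpr (Or.inr ⟨h2, rfl⟩)
  have ha2 : G.Adj (p.1, q.2) q := hg_adj.mpr (Or.inl ⟨h1, rfl⟩)
  have hle : G.dist p q ≤ 2 := by
    have := SimpleGraph.dist_le (Walk.cons ha1 (Walk.cons ha2 Walk.nil))
    simpa using this
  have hne : p ≠ q := fun h => h1 (by rw [h])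
  have hpos : 0 < G.dist p q := Reachable.pos_dist_of_ne ⟨Walk.cons ha1 (Walk.cons ha2 Walk.nil)⟩ hne
  have hnadj : ¬ G.Adj p q := by
    rw [hg_adj]; rintro (⟨_, h⟩ | ⟨_, h⟩) <;> [exact h2 h; exact h1 h]
  have h1' : G.dist p q ≠ 1 := fun h => hnadj (SimpleGraph.dist_eq_one_iff_adj.mp h)
  omega

lemma walk_two {V : Type*} {G : SimpleGraph V} {u v : V} (p : G.Walk u v)
    (h : p.length = 2) : ∃ x, G.Adj u x ∧ G.Adj x v ∧ p.support = [u, x, v] := by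
  cases p with
  | nil => simp at h
  | cons h1 q =>
    cases q with
    | nil => simp at h
    | cons h2 r =>
      cases r with
      | nil => exact ⟨_, h1, h2, by simp⟩
      | cons h3 s => simp [Nat.succ_eq_add_one] at h


lemma hg_mid {m n : ℕ} {u v x : Fin m × Fin n} (h1 : u.1 ≠ v.1) (h2 : u.2 ≠ v.2)
    (ha : ((⊤ : SimpleGraph (Fin m)) □ (⊤ : SimpleGraph (Fin n))).Adj u x)
    (hb : ((⊤ : SimpleGraph (Fin m)) □ (⊤ : SimpleGraph (Fin n))).Adj x v) :
    x = (u.1, v.2) ∨ x = (v.1, u.2) := by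
  rw [hg_adj] at ha hb
  rcases ha with ⟨ha1, ha2⟩ | ⟨ha1, ha2⟩ <;> rcases hb with ⟨hb1, hb2⟩ | ⟨hb1, hb2⟩
  · exact absurd (ha2.trans hb2) h2
  · exact Or.inr (Prod.ext hb2 ha2.symm)
  · exact Or.inl (Prod.ext ha2.symm hb2)
  · exact absurd (ha2.trans hb2) h1

def path2 {V : Type*} {G : SimpleGraph V} {u x v : V}
    (h1 : G.Adj u x) (h2 : G.Adj x v) (huv : u ≠ v) : G.Path u v :=
  ⟨Walk.cons h1 (Walk.cons h2 Walk.nil), by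
    simp [Walk.isPath_def, h1.ne, h2.ne, huv]⟩

lemma path2_support {V : Type*} {G : SimpleGraph V} {u x v : V}
    (h1 : G.Adj u x) (h2 : G.Adj x v) (huv : u ≠ v) :
    (path2 h1 h2 huv).1.support = [u, x, v] := by
  simp [path2]

lemma path2_length {V : Type*} {G : SimpleGraph V} {u x v : V}
    (h1 : G.Adj u x) (h2 : G.Adj x v) (huv : u ≠ v) :
    (path2 h1 h2 huv).1.length = 2 := by
  simp [path2]


lemma crossfree_bound {m n : ℕ} (hm : 2 ≤ m) (hn : 2 ≤ n) (X : Set (Fin m × Fin n))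
    (hX : ∀ p ∈ X, ∀ q ∈ X, p.1 ≠ q.1 → p.2 ≠ q.2 → (p.1, q.2) ∉ X) :
    X.ncard ≤ m + n - 2 := by
  classical
  set Sh : Set (Fin n) := {b | ∃ p ∈ X, ∃ q ∈ X, p.2 = b ∧ q.2 = b ∧ p.1 ≠ q.1} with hSh
  set X0 : Set (Fin m × Fin n) := {p ∈ X | p.2 ∈ Sh} with hX0
  set X1 : Set (Fin m × Fin n) := {p ∈ X | p.2 ∉ Sh} with hX1
  have hsplit : X.ncard = X0.ncard + X1.ncard := by
    rw [← Set.ncard_union_eq (by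
        rw [Set.disjoint_left]; rintro p ⟨_, h⟩ ⟨_, h'⟩; exact h' h)
      (Set.toFinite _) (Set.toFinite _)]
    congr 1
    ext p
    by_cases h : p.2 ∈ Sh <;> simp [hX0, hX1, h]
  -- injectivity of fst on X0
  have hinj0 : Set.InjOn Prod.fst X0 := by
    rintro p ⟨hpX, hpSh⟩ q ⟨hqX, hqSh⟩ hfst
    by_contra hne
    have hsnd : p.2 ≠ q.2 := fun h => hne (Prod.ext hfst h)
    obtain ⟨r, hrX, s, hsX, hr2, hs2, hrs⟩ := hqSh
    -- one of r, s has first coord ≠ p.1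
    have : ∃ t ∈ X, t.2 = q.2 ∧ t.1 ≠ p.1 := by
      by_cases h : r.1 = p.1
      · exact ⟨s, hsX, hs2, fun h' => hrs (h.trans h'.symm)⟩
      · exact ⟨r, hrX, hr2, h⟩
    obtain ⟨t, htX, ht2, ht1⟩ := this
    have := hX p hpX t htX (fun h => ht1 h.symm) (ht2 ▸ hsnd)
    rw [ht2] at this
    exact this (by rw [hfst]; exact hqX)
  have h0m : X0.ncard ≤ m := by
    have := Set.ncard_le_ncard_of_injOn Prod.fst (fun a _ => Set.mem_univ a.1) hinj0
      (Set.toFinite _)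
    simpa [Set.ncard_univ] using this
  -- injectivity of snd on X1
  have hinj1 : Set.InjOn Prod.snd X1 := by
    rintro p ⟨hpX, hpSh⟩ q ⟨hqX, hqSh⟩ hsnd
    by_contra hne
    have hfst : p.1 ≠ q.1 := fun h => hne (Prod.ext h hsnd)
    exact hqSh ⟨p, hpX, q, hqX, hsnd, rfl, hfst⟩
  have h1n : X1.ncard ≤ Shᶜ.ncard := by
    exact Set.ncard_le_ncard_of_injOn Prod.snd (fun a ha => ha.2) hinj1 (Set.toFinite _)
  have hShn : Sh.ncard + Shᶜ.ncard = n := by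
    rw [Set.ncard_add_ncard_compl]; simp
  rcases Nat.lt_or_ge Sh.ncard 2 with hlt | hge
  · interval_cases h : Sh.ncard
    · -- Sh empty
      have hSh0 : Sh = ∅ := (Set.ncard_eq_zero (Set.toFinite _)).mp h
      have : X0 = ∅ := by
        ext p; simp [hX0, hSh0]
      rw [hsplit, this]
      simp only [Set.ncard_empty]
      omega
    · -- Sh = {b0}
      obtain ⟨b0, hb0⟩ := Set.ncard_eq_one.mp h
      rcases Set.eq_empty_or_nonempty X1 with hX1e | ⟨p1, hp1⟩
      · rw [hsplit, hX1e]
        simp only [Set.ncard_empty]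
        omega
      · -- X0 avoids row p1.1
        have havoid : ∀ p ∈ X0, p.1 ≠ p1.1 := by
          rintro p ⟨hpX, hpSh⟩ heq
          rw [hb0] at hpSh
          have hp2 : p.2 = b0 := hpSh
          obtain ⟨hp1X, hp1Sh⟩ := hp1
          have hp12 : p1.2 ≠ b0 := by rw [hb0] at hp1Sh; exact hp1Sh
          -- b0 shared: from p ∈ X with p.2 = b0 ... need two rows in b0
          have hb0Sh : b0 ∈ Sh := by rw [hb0]; rfl
          obtain ⟨r, hrX, s, hsX, hr2, hs2, hrs⟩ := hb0Sh
          have : ∃ t ∈ X, t.2 = b0 ∧ t.1 ≠ p1.1 := by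
            by_cases hc : r.1 = p1.1
            · exact ⟨s, hsX, hs2, fun h' => hrs (hc.trans h'.symm)⟩
            · exact ⟨r, hrX, hr2, hc⟩
          obtain ⟨t, htX, ht2, ht1⟩ := this
          have := hX p1 hp1X t htX (fun h => ht1 h.symm) (by rw [ht2]; exact hp12)
          rw [ht2] at this
          apply this
          have : (p1.1, b0) = p := Prod.ext (heq ▸ rfl) hp2.symm
          rw [this]; exact hpX
        have h0m' : X0.ncard ≤ ({p1.1}ᶜ : Set (Fin m)).ncard := by
          exact Set.ncard_le_ncard_of_injOn Prod.fst (fun a ha => havoid a ha) hinj0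
            (Set.toFinite _)
        have hcm : ({p1.1} : Set (Fin m)).ncard + ({p1.1}ᶜ : Set (Fin m)).ncard = m := by
          rw [Set.ncard_add_ncard_compl]; simp
        rw [Set.ncard_singleton] at hcm
        omega
  · have hShle : Sh.ncard ≤ n := by omega
    omega



-- ftmv set is cross-free
lemma ftmv_crossfree {m n : ℕ} (X : Set (Fin m × Fin n))
    (h : IsFtmvSet ((⊤ : SimpleGraph (Fin m)) □ (⊤ : SimpleGraph (Fin n))) 1 X) :
    ∀ p ∈ X, ∀ q ∈ X, p.1 ≠ q.1 → p.2 ≠ q.2 → (p.1, q.2) ∉ X := by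
  set G := (⊤ : SimpleGraph (Fin m)) □ (⊤ : SimpleGraph (Fin n)) with hG
  intro p hp q hq h1 h2 hmem
  have hne : p ≠ q := fun h => h1 (by rw [h])
  have hnadj : ¬ G.Adj p q := by
    rw [hG, hg_adj]; rintro (⟨_, h⟩ | ⟨_, h⟩) <;> [exact h2 h; exact h1 h]
  obtain ⟨P, hlen, hXin, hdisj⟩ := h p hp q hq hne hnadj
  have hdist : G.dist p q = 2 := hg_dist_two h1 h2
  obtain ⟨x0, ha0, hb0, hs0⟩ := walk_two (P 0).1 (by rw [hlen 0, hdist])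
  obtain ⟨x1, ha1, hb1, hs1⟩ := walk_two (P 1).1 (by rw [hlen 1, hdist])
  have hx01 : x0 ≠ x1 := by
    intro hxe
    have hm0 : x0 ∈ (P 0).1.support := by rw [hs0]; simp
    have hm1 : x0 ∈ (P 1).1.support := by rw [hs1, hxe]; simp
    rcases hdisj 0 1 (by decide) x0 hm0 hm1 with h | h
    · exact ha0.ne' h
    · exact hb0.ne h
  have hmid : ((p.1, q.2) = x0 ∧ (0:Fin 2) = 0) ∨ (p.1, q.2) = x1 := by
    rcases hg_mid h1 h2 ha0 hb0 with c0 | c0 <;> rcases hg_mid h1 h2 ha1 hb1 with c1 | c1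
    · exact Or.inl ⟨c0.symm, rfl⟩
    · exact Or.inl ⟨c0.symm, rfl⟩
    · exact Or.inr c1.symm
    · exact absurd (c0.trans c1.symm) hx01
  have final : ∀ i : Fin 2, ∀ x, (P i).1.support = [p, x, q] → (p.1, q.2) = x → False := by
    intro i x hs he
    have hsup : (p.1, q.2) ∈ (P i).1.support := by rw [hs, he]; simp
    rcases hXin i _ hsup hmem with h' | h'
    · exact h2 (Prod.ext_iff.mp h').2.symm
    · exact h1 (Prod.ext_iff.mp h').1
  rcases hmid with ⟨he, _⟩ | he
  · exact final 0 x0 hs0 he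
  · exact final 1 x1 hs1 he

lemma exists_good_set {m n : ℕ} (hm : 2 ≤ m) (hn : 2 ≤ n) :
    ∃ X : Set (Fin m × Fin n),
      IsFtmvSet ((⊤ : SimpleGraph (Fin m)) □ (⊤ : SimpleGraph (Fin n))) 1 X ∧
      X.ncard = m + n - 2 := by
  set G := (⊤ : SimpleGraph (Fin m)) □ (⊤ : SimpleGraph (Fin n)) with hG
  have hm0 : 0 < m := by omega
  have hn0 : 0 < n := by omega
  set r : Fin m := ⟨0, hm0⟩ with hr
  set t : Fin n := ⟨0, hn0⟩ with ht
  set X : Set (Fin m × Fin n) :=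
    {p | (p.1 = r ∧ p.2 ≠ t) ∨ (p.2 = t ∧ p.1 ≠ r)} with hXdef
  -- middles are never in X
  have hmids : ∀ u ∈ X, ∀ v ∈ X, u.1 ≠ v.1 → u.2 ≠ v.2 →
      (u.1, v.2) ∉ X ∧ (v.1, u.2) ∉ X := by
    rintro u hu v hv h1 h2
    rcases hu with ⟨hu1, hu2⟩ | ⟨hu1, hu2⟩ <;> rcases hv with ⟨hv1, hv2⟩ | ⟨hv1, hv2⟩
    · exact absurd (hu1.trans hv1.symm) h1
    · constructor <;> rintro (⟨c1, c2⟩ | ⟨c1, c2⟩) <;> simp_all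
    · constructor <;> rintro (⟨c1, c2⟩ | ⟨c1, c2⟩) <;> simp_all
    · exact absurd (hu1.trans hv1.symm) h2
  refine ⟨X, ?_, ?_⟩
  · intro u hu v hv hne hnadj
    obtain ⟨h1, h2⟩ := hg_nonadj hne hnadj
    obtain ⟨hm1, hm2⟩ := hmids u hu v hv h1 h2
    have ha1 : G.Adj u (u.1, v.2) := hg_adj.mpr (Or.inr ⟨h2, rfl⟩)
    have hb1 : G.Adj (u.1, v.2) v := hg_adj.mpr (Or.inl ⟨h1, rfl⟩)
    have ha2 : G.Adj u (v.1, u.2) := hg_adj.mpr (Or.inl ⟨h1, rfl⟩)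
    have hb2 : G.Adj (v.1, u.2) v := hg_adj.mpr (Or.inr ⟨h2, rfl⟩)
    refine ⟨![path2 ha1 hb1 hne, path2 ha2 hb2 hne], ?_, ?_, ?_⟩
    · intro i
      fin_cases i <;>
        simp only [Matrix.cons_val_zero, Matrix.cons_val_one, Matrix.head_cons] <;>
        rw [hg_dist_two h1 h2] <;> simp [path2]
    · intro i w hw hwX
      fin_cases i <;>
        simp only [Matrix.cons_val_zero, Matrix.cons_val_one, Matrix.head_cons] at hw <;>
        simp [path2] at hw <;>
        rcases hw with h | h | h
      · exact Or.inl h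
      · exact absurd (h ▸ hwX) hm1
      · exact Or.inr h
      · exact Or.inl h
      · exact absurd (h ▸ hwX) hm2
      · exact Or.inr h
    · intro i j hij w hwi hwj
      have hmne : (u.1, v.2) ≠ (v.1, u.2) := fun h => h1 (Prod.ext_iff.mp h).1
      have hsup : ∀ i : Fin 2, (![path2 ha1 hb1 hne, path2 ha2 hb2 hne] i).1.support =
          [u, ![(u.1, v.2), (v.1, u.2)] i, v] := by
        intro i
        fin_cases i <;>
          simp only [Matrix.cons_val_zero, Matrix.cons_val_one, Matrix.head_cons] <;>
          simp [path2]
      rw [hsup i] at hwi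
      rw [hsup j] at hwj
      simp only [List.mem_cons, List.not_mem_nil, or_false] at hwi hwj
      rcases hwi with h | h | h
      · exact Or.inl h
      · rcases hwj with h' | h' | h'
        · exact Or.inl h'
        · exfalso
          fin_cases i <;> fin_cases j <;>
            simp only [Matrix.cons_val_zero, Matrix.cons_val_one, Matrix.head_cons] at h h' <;>
            first
              | exact hij rfl
              | exact hmne (h.symm.trans h')
              | exact hmne (h'.symm.trans h)
        · exact Or.inr h'
      · exact Or.inr h
  · -- cardinality
    have hXeq : X = (fun j => (r, j)) '' ({t}ᶜ) ∪ (fun i => (i, t)) '' ({r}ᶜ) := by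
      ext p
      simp only [hXdef, Set.mem_setOf_eq, Set.mem_union, Set.mem_image, Set.mem_compl_iff,
        Set.mem_singleton_iff]
      constructor
      · rintro (⟨h1, h2⟩ | ⟨h1, h2⟩)
        · exact Or.inl ⟨p.2, h2, by rw [← h1]⟩
        · exact Or.inr ⟨p.1, h2, by rw [← h1]⟩
      · rintro (⟨j, hj, hp⟩ | ⟨i, hi, hp⟩)
        · exact Or.inl ⟨by rw [← hp], by rw [← hp]; exact hj⟩
        · exact Or.inr ⟨by rw [← hp], by rw [← hp]; exact hi⟩
    have hdisj : Disjoint ((fun j => (r, j)) '' ({t}ᶜ : Set (Fin n)))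
        ((fun i => (i, t)) '' ({r}ᶜ : Set (Fin m))) := by
      rw [Set.disjoint_left]
      rintro p ⟨j, hj, hp⟩ ⟨i, hi, hp'⟩
      apply hj
      rw [← hp] at hp'
      have : t = j := congrArg Prod.snd hp'
      exact this.symm
    have hc1 : ((fun j => (r, j)) '' ({t}ᶜ : Set (Fin n))).ncard = n - 1 := by
      rw [Set.ncard_image_of_injective _ (fun a b h => (Prod.ext_iff.mp h).2)]
      have := Set.ncard_add_ncard_compl ({t} : Set (Fin n))
      simp [Set.ncard_singleton, Set.ncard_univ] at this ⊢
      omega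
    have hc2 : ((fun i => (i, t)) '' ({r}ᶜ : Set (Fin m))).ncard = m - 1 := by
      rw [Set.ncard_image_of_injective _ (fun a b h => (Prod.ext_iff.mp h).1)]
      have := Set.ncard_add_ncard_compl ({r} : Set (Fin m))
      simp [Set.ncard_singleton, Set.ncard_univ] at this ⊢
      omega
    rw [hXeq, Set.ncard_union_eq hdisj (Set.toFinite _) (Set.toFinite _), hc1, hc2]
    omega


theorem stmt18 (m n : ℕ) (hm : 2 ≤ m) (hn : 2 ≤ n) :
    ftmvNum ((⊤ : SimpleGraph (Fin m)) □ (⊤ : SimpleGraph (Fin n))) 1 = m + n - 2 := by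
  set G := (⊤ : SimpleGraph (Fin m)) □ (⊤ : SimpleGraph (Fin n)) with hG
  have hub : ∀ k ∈ {k | ∃ X : Set (Fin m × Fin n), IsFtmvSet G 1 X ∧ X.ncard = k},
      k ≤ m + n - 2 := by
    rintro k ⟨X, hX, rfl⟩
    exact crossfree_bound hm hn X (ftmv_crossfree X hX)
  obtain ⟨X, hX, hc⟩ := exists_good_set hm hn
  have hmem : m + n - 2 ∈ {k | ∃ X : Set (Fin m × Fin n), IsFtmvSet G 1 X ∧ X.ncard = k} :=
    ⟨X, hX, hc⟩
  unfold ftmvNum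
  exact le_antisymm (csSup_le ⟨_, hmem⟩ hub) (le_csSup ⟨m + n - 2, hub⟩ hmem)
end
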